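/- arXiv:1610.00847 — 3 statements merged into one kernel-verified Lean document; each statement's English description precedes it below -/
import Mathlib

section
/- Let M be a compact oriented manifold of dimension n+k carrying a locally free action of a connected abelian group H with dim h = k, and let W ⊂ Ω¹(M)^H with basis w₁,…,w_k satisfy dW ⊂ Ω²_B(M) and non-degenerate pairing with h. Then wedging with w₁∧⋯∧w_k induces an isomorphism H^n_B(M) ≅ H^{n+k}(M). In particular, if M is compact and oriented, the foliation by H-orbits is homologically oriented (H^n_B(M) ≠ 0). -/
/-!
Contractions detect top-degree forms: since `wᵢ` has degree one and `ι (b i) wᵢ = 1`, a form of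
degree `m` killed by `ι (b i)` for all `i ∈ S` vanishes as soon as `m + |S| > n + k`.

Surjectivity: averaging replaces a top form `α` by a cohomologous invariant form, whose top
component is still invariant and cohomologous to `α`. Contracting it successively by
`b_k, …, b₁` splits off `w_k, …, w₁` on the right and leaves a basic closed `β` with
`α - β w₁ ⋯ w_k` exact.

Injectivity: if `β w₁ ⋯ w_k = dz`, averaging makes `z` invariant, and by Cartan's formula
`ι (b_j) z` is, up to sign, an invariant primitive of `β w₁ ⋯ w_{j-1}`; `k` contractions give a
basic primitive of `β`.

Homological orientation: if `β = dδ` with `δ` basic, the component `δ'` of degree `n - 1` of `δ`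
satisfies `d (δ' w₁ ⋯ w_k) = β w₁ ⋯ w_k`, again by detection, because the contractions of `δ'`
only see the degree-zero part of `δ`, which is invisible against forms of positive degree. So a
top form that is not exact yields a basic class that is not zero.
-/

open DirectSum GradedAlgebra

theorem neg_one_pow_smul_neg_one_pow_smul {R M : Type*} [Ring R] [AddCommGroup M] [Module R M]
    (m : ℕ) (x : M) : (-1 : R) ^ m • (-1 : R) ^ m • x = x := by
  rw [smul_smul, ← pow_add, ← two_mul, pow_mul, neg_one_sq, one_pow, one_smul]

theorem Module.Basis.apply_apply_eq_zero {κ R M N : Type*} [CommRing R] [AddCommGroup M]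
    [Module R M] [AddCommGroup N] [Module R N] {F : M →ₗ[R] Module.End R N}
    (b : Module.Basis κ R M) {x : N} (h : ∀ i, F (b i) x = 0) (v : M) : F v x = 0 :=
  LinearMap.congr_fun (b.ext (f₁ := (LinearMap.applyₗ x).comp F) (f₂ := 0) h) v

section GradedProjection

variable {I R A : Type*} [DecidableEq I] [AddMonoid I] [CommRing R] [Ring A] [Algebra R A]
  (𝒜 : I → Submodule R A) [GradedAlgebra 𝒜]

theorem GradedAlgebra.proj_of_mem {i : I} {x : A} (hx : x ∈ 𝒜 i) : proj 𝒜 i x = x :=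
  decompose_of_mem_same 𝒜 hx

theorem GradedAlgebra.proj_of_mem_ne {i j : I} {x : A} (hx : x ∈ 𝒜 i) (hij : i ≠ j) :
    proj 𝒜 j x = 0 :=
  decompose_of_mem_ne 𝒜 hx hij

theorem GradedAlgebra.proj_mem (i : I) (x : A) : proj 𝒜 i x ∈ 𝒜 i :=
  SetLike.coe_mem _

end GradedProjection

section NatGradedProjection

variable {R A : Type*} [CommRing R] [Ring A] [Algebra R A] (𝒜 : ℕ → Submodule R A)
  [GradedAlgebra 𝒜]

theorem GradedAlgebra.proj_add_map (T : A →ₗ[R] A) {r : ℕ}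
    (hT : ∀ m, ∀ x ∈ 𝒜 m, T x ∈ 𝒜 (m + r)) (x : A) (m : ℕ) :
    proj 𝒜 (m + r) (T x) = T (proj 𝒜 m x) := by
  induction x using DirectSum.Decomposition.inductionOn 𝒜 with
  | zero => simp
  | @homogeneous i y =>
    obtain ⟨y, hy⟩ := y
    by_cases h : i = m
    · subst h
      rw [proj_of_mem 𝒜 (hT _ _ hy), proj_of_mem 𝒜 hy]
    · rw [proj_of_mem_ne 𝒜 (hT _ _ hy) (by omega), proj_of_mem_ne 𝒜 hy h, map_zero]
  | add x y hx hy => simp only [map_add, hx, hy]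

theorem GradedAlgebra.proj_map_of_lt (T : A →ₗ[R] A) {r : ℕ}
    (hT : ∀ m, ∀ x ∈ 𝒜 m, T x ∈ 𝒜 (m + r)) (x : A) {j : ℕ} (hj : j < r) :
    proj 𝒜 j (T x) = 0 := by
  induction x using DirectSum.Decomposition.inductionOn 𝒜 with
  | zero => simp
  | homogeneous y => exact proj_of_mem_ne 𝒜 (hT _ _ y.2) (by omega)
  | add x y hx hy => simp only [map_add, hx, hy, add_zero]

theorem GradedAlgebra.proj_add_map_of_succ (T : A →ₗ[R] A) {s : ℕ}
    (hT : ∀ m, ∀ x ∈ 𝒜 (m + 1), T x ∈ 𝒜 (m + s)) (x : A) (m : ℕ) :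
    proj 𝒜 (m + s) (T x) = T (proj 𝒜 (m + 1) x) + proj 𝒜 (m + s) (T (proj 𝒜 0 x)) := by
  induction x using DirectSum.Decomposition.inductionOn 𝒜 with
  | zero => simp
  | @homogeneous i y =>
    obtain ⟨y, hy⟩ := y
    rcases i with _ | q
    · rw [proj_of_mem_ne 𝒜 hy (j := m + 1) (by omega), map_zero, zero_add, proj_of_mem 𝒜 hy]
    · rw [proj_of_mem_ne 𝒜 hy (j := 0) (by omega), map_zero, map_zero, add_zero]
      by_cases h : q = m
      · subst h
        rw [proj_of_mem 𝒜 (hT _ _ hy), proj_of_mem 𝒜 hy]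
      · rw [proj_of_mem_ne 𝒜 (hT _ _ hy) (by omega), proj_of_mem_ne 𝒜 hy (by omega), map_zero]
  | add x y hx hy =>
    simp only [map_add, hx, hy]
    abel

theorem GradedAlgebra.proj_mul_eq_zero_of_mul_mem {x y : A} {l p : ℕ} (hx : x ∈ 𝒜 l)
    (hyx : y * x ∈ 𝒜 p) {m : ℕ} (h : p ≠ m + l) : proj 𝒜 m y * x = 0 := by
  rw [proj_apply, ← coe_decompose_mul_add_of_right_mem 𝒜 hx]
  exact decompose_of_mem_ne 𝒜 hyx h

theorem GradedAlgebra.mul_eq_zero_of_forall_proj_mul_eq_zero {x y : A}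
    (h : ∀ m, proj 𝒜 m y * x = 0) : y * x = 0 := by
  classical
  rw [← sum_support_decompose 𝒜 y, Finset.sum_mul]
  exact Finset.sum_eq_zero fun m _ => h m

end NatGradedProjection

section CartanCalculus

variable {R A 𝔥 : Type*} [CommRing R] [Ring A] [Algebra R A] [AddCommGroup 𝔥] [Module R 𝔥]

structure IsCartanCalculus (𝒜 : ℕ → Submodule R A) (d : A →ₗ[R] A)
    (ι L : 𝔥 →ₗ[R] Module.End R A) : Prop where
  d_mem : ∀ m : ℕ, ∀ a ∈ 𝒜 m, d a ∈ 𝒜 (m + 1)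
  ι_ι : ∀ v x, ι v (ι v x) = 0
  ι_L : ∀ v u x, ι v (L u x) = L u (ι v x)
  L_eq : ∀ v x, L v x = d (ι v x) + ι v (d x)
  ι_mem : ∀ v (m : ℕ), ∀ a ∈ 𝒜 (m + 1), ι v a ∈ 𝒜 m
  ι_mul : ∀ v (m : ℕ), ∀ a ∈ 𝒜 m, ∀ x, ι v (a * x) = ι v a * x + (-1 : R) ^ m • (a * ι v x)
  L_mul : ∀ v a x, L v (a * x) = L v a * x + a * L v x

variable {𝒜 : ℕ → Submodule R A} {d : A →ₗ[R] A} {ι L : 𝔥 →ₗ[R] Module.End R A}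

variable (ι L) in
def IsBasic (x : A) : Prop :=
  ∀ v, ι v x = 0 ∧ L v x = 0

theorem isBasic_of_basis {κ : Type*} (b : Module.Basis κ R 𝔥) {x : A}
    (hι : ∀ i, ι (b i) x = 0) (hL : ∀ v, L v x = 0) : IsBasic ι L x :=
  fun v => ⟨b.apply_apply_eq_zero hι v, hL v⟩

variable (d L) in
def invariantCocycles : Submodule R A :=
  LinearMap.ker d ⊓ ⨅ v, LinearMap.ker (L v)

theorem mem_invariantCocycles {x : A} :
    x ∈ invariantCocycles d L ↔ d x = 0 ∧ ∀ v, L v x = 0 := by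
  simp [invariantCocycles, Submodule.mem_iInf]

namespace IsCartanCalculus

theorem L_one (hC : IsCartanCalculus 𝒜 d ι L) (v : 𝔥) : L v 1 = 0 := by
  have h := hC.L_mul v 1 1
  simp only [mul_one, one_mul] at h
  exact add_eq_right.mp h.symm

theorem ι_ι_anticomm (hC : IsCartanCalculus 𝒜 d ι L) (u v : 𝔥) (x : A) :
    ι u (ι v x) = -ι v (ι u x) := by
  have h := hC.ι_ι (u + v) x
  simp only [map_add, LinearMap.add_apply, hC.ι_ι] at h
  exact eq_neg_of_add_eq_zero_right (by simpa using h)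

theorem L_mem (hC : IsCartanCalculus 𝒜 d ι L) (v : 𝔥) {m : ℕ} {a : A} (ha : a ∈ 𝒜 (m + 1)) :
    L v a ∈ 𝒜 (m + 1) := by
  rw [hC.L_eq]
  exact add_mem (hC.d_mem _ _ (hC.ι_mem v m a ha)) (hC.ι_mem v _ _ (hC.d_mem _ _ ha))

theorem ι_d_of_L_eq_zero (hC : IsCartanCalculus 𝒜 d ι L) {v : 𝔥} {x : A} (h : L v x = 0) :
    ι v (d x) = -d (ι v x) := by
  rw [hC.L_eq] at h
  exact eq_neg_of_add_eq_zero_right h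

theorem ι_mem_invariantCocycles (hC : IsCartanCalculus 𝒜 d ι L) (v : 𝔥) {x : A}
    (hx : x ∈ invariantCocycles d L) : ι v x ∈ invariantCocycles d L := by
  rw [mem_invariantCocycles] at hx ⊢
  obtain ⟨hdx, hLx⟩ := hx
  refine ⟨?_, fun u => by rw [← hC.ι_L, hLx, map_zero]⟩
  simpa [hdx] using (hC.ι_d_of_L_eq_zero (hLx v)).symm

variable [GradedAlgebra 𝒜]

theorem ι_one (hC : IsCartanCalculus 𝒜 d ι L) (v : 𝔥) : ι v 1 = 0 := by
  have h := hC.ι_mul v 0 1 SetLike.GradedOne.one_mem 1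
  simp only [mul_one, one_mul, pow_zero, one_smul] at h
  exact add_eq_right.mp h.symm

theorem proj_succ_d (hC : IsCartanCalculus 𝒜 d ι L) (x : A) (m : ℕ) :
    proj 𝒜 (m + 1) (d x) = d (proj 𝒜 m x) :=
  proj_add_map 𝒜 d hC.d_mem x m

theorem proj_zero_d (hC : IsCartanCalculus 𝒜 d ι L) (x : A) : proj 𝒜 0 (d x) = 0 :=
  proj_map_of_lt 𝒜 d hC.d_mem x Nat.zero_lt_one

theorem proj_ι (hC : IsCartanCalculus 𝒜 d ι L) (v : 𝔥) (x : A) (m : ℕ) :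
    proj 𝒜 m (ι v x) = ι v (proj 𝒜 (m + 1) x) + proj 𝒜 m (ι v (proj 𝒜 0 x)) :=
  proj_add_map_of_succ 𝒜 (ι v) (s := 0) (hC.ι_mem v) x m

theorem proj_L_of_proj_zero_eq_zero (hC : IsCartanCalculus 𝒜 d ι L) (v : 𝔥) {x : A}
    (hx : proj 𝒜 0 x = 0) (m : ℕ) : proj 𝒜 (m + 1) (L v x) = L v (proj 𝒜 (m + 1) x) := by
  rw [proj_add_map_of_succ 𝒜 (L v) (s := 1) (fun m _ => hC.L_mem v) x m, hx, map_zero, map_zero,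
    add_zero]

/-- Values of `ι v` on `𝒜 0` are unconstrained, but invisible against forms `x` of positive
degree: `ι v a * x = ι v (a * x) - a * ι v x` has degree one less than `x`. -/
theorem proj_ι_mul_eq_zero (hC : IsCartanCalculus 𝒜 d ι L) (v : 𝔥) {a x : A} (ha : a ∈ 𝒜 0)
    {l : ℕ} (hx : x ∈ 𝒜 (l + 1)) (m : ℕ) : proj 𝒜 m (ι v a) * x = 0 := by
  have hmem : ι v a * x ∈ 𝒜 l := by
    have h := hC.ι_mul v 0 a ha x
    rw [pow_zero, one_smul] at h
    rw [eq_sub_of_add_eq h.symm]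
    refine sub_mem (hC.ι_mem v l _ ?_) ?_
    · simpa using SetLike.mul_mem_graded ha hx
    · simpa using SetLike.mul_mem_graded ha (hC.ι_mem v l x hx)
  exact proj_mul_eq_zero_of_mul_mem 𝒜 hx hmem (by omega)

theorem proj_d_ι_mul_eq_zero (hC : IsCartanCalculus 𝒜 d ι L) (v : 𝔥) {a x : A} (ha : a ∈ 𝒜 0)
    (hda : ι v (d a) = 0) {l : ℕ} (hx : x ∈ 𝒜 (l + 1)) (m : ℕ) :
    proj 𝒜 m (d (ι v a)) * x = 0 := by
  rcases m with _ | m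
  · rw [hC.proj_zero_d, zero_mul]
  have hmem : d (ι v a) * x ∈ 𝒜 (l + 1) := by
    have h := hC.L_mul v a x
    rw [hC.L_eq v a, hda, add_zero] at h
    rw [eq_sub_of_add_eq h.symm]
    refine sub_mem (hC.L_mem v ?_) ?_
    · simpa using SetLike.mul_mem_graded ha hx
    · simpa using SetLike.mul_mem_graded ha (hC.L_mem v hx)
  exact proj_mul_eq_zero_of_mul_mem 𝒜 hx hmem (by omega)

theorem ι_proj_mul_eq_zero (hC : IsCartanCalculus 𝒜 d ι L) {v : 𝔥} {δ : A} (hδ : ι v δ = 0)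
    (hdδ : ι v (d δ) = 0) (m : ℕ) {l : ℕ} {x : A} (hx : x ∈ 𝒜 (l + 1)) :
    ι v (proj 𝒜 m δ) * x = 0 ∧ d (ι v (proj 𝒜 m δ)) * x = 0 := by
  set a := proj 𝒜 0 δ
  have ha : a ∈ 𝒜 0 := proj_mem 𝒜 0 δ
  have hda : ι v (d a) = 0 := by
    have h := hC.proj_ι v (d δ) 0
    rw [hdδ, map_zero, hC.proj_zero_d, map_zero, map_zero, add_zero, ← zero_add 1,
      hC.proj_succ_d] at h
    exact h.symm
  rcases m with _ | m
  · exact ⟨mul_eq_zero_of_forall_proj_mul_eq_zero 𝒜 (hC.proj_ι_mul_eq_zero v ha hx),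
      mul_eq_zero_of_forall_proj_mul_eq_zero 𝒜 (hC.proj_d_ι_mul_eq_zero v ha hda hx)⟩
  · have h := hC.proj_ι v δ m
    rw [hδ, map_zero, eq_comm, add_eq_zero_iff_eq_neg] at h
    rw [h, map_neg, ← hC.proj_succ_d, neg_mul, neg_mul, hC.proj_ι_mul_eq_zero v ha hx,
      hC.proj_d_ι_mul_eq_zero v ha hda hx, neg_zero]
    exact ⟨rfl, rfl⟩

end IsCartanCalculus

variable {k : ℕ} {b : Module.Basis (Fin k) R 𝔥} {w : Fin k → A}

variable (𝒜 ι L b w) in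
structure IsDualFrame : Prop where
  mem : ∀ i, w i ∈ 𝒜 1
  L_eq_zero : ∀ v i, L v (w i) = 0
  ι_eq : ∀ i j, ι (b i) (w j) = if i = j then 1 else 0

variable (w) in
def prefixWedge (j : ℕ) : A := ((List.ofFn w).take j).prod

@[simp]
theorem prefixWedge_zero : prefixWedge w 0 = 1 := by
  simp [prefixWedge]

theorem prefixWedge_succ {j : ℕ} (hj : j < k) :
    prefixWedge w (j + 1) = prefixWedge w j * w ⟨j, hj⟩ := by
  rw [prefixWedge, prefixWedge, List.prod_take_succ _ _ (by simpa using hj)]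
  simp

theorem prefixWedge_self : prefixWedge w k = (List.ofFn w).prod := by
  rw [prefixWedge, List.take_of_length_le (by simp)]

namespace IsDualFrame

theorem L_prefixWedge (hF : IsDualFrame 𝒜 ι L b w) (hC : IsCartanCalculus 𝒜 d ι L) (v : 𝔥)
    {j : ℕ} (hj : j ≤ k) : L v (prefixWedge w j) = 0 := by
  induction j with
  | zero => simpa using hC.L_one v
  | succ j ih =>
    rw [prefixWedge_succ hj, hC.L_mul, ih (by omega), hF.L_eq_zero, zero_mul, mul_zero, add_zero]

variable [GradedAlgebra 𝒜]

theorem prefixWedge_mem (hF : IsDualFrame 𝒜 ι L b w) {j : ℕ} (hj : j ≤ k) :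
    prefixWedge w j ∈ 𝒜 j := by
  induction j with
  | zero => simpa using SetLike.GradedOne.one_mem
  | succ j ih =>
    rw [prefixWedge_succ hj]
    exact SetLike.mul_mem_graded (ih (by omega)) (hF.mem _)

theorem ι_prefixWedge_of_le (hF : IsDualFrame 𝒜 ι L b w)
    (hC : IsCartanCalculus 𝒜 d ι L) {i : Fin k} {j : ℕ} (hij : j ≤ i) :
    ι (b i) (prefixWedge w j) = 0 := by
  induction j with
  | zero => simpa using hC.ι_one (b i)
  | succ j ih =>
    rw [prefixWedge_succ (by omega), hC.ι_mul _ j _ (hF.prefixWedge_mem (by omega)), ih (by omega),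
      hF.ι_eq, if_neg (fun e => by simp [e] at hij), zero_mul, mul_zero, smul_zero, add_zero]

theorem ι_prefixWedge_succ (hF : IsDualFrame 𝒜 ι L b w)
    (hC : IsCartanCalculus 𝒜 d ι L) {i : Fin k} {j : ℕ} (hij : j ≤ i) :
    ι (b i) (prefixWedge w (j + 1)) =
      if (i : ℕ) = j then (-1 : R) ^ j • prefixWedge w j else 0 := by
  rw [prefixWedge_succ (by omega), hC.ι_mul _ j _ (hF.prefixWedge_mem (by omega)),
    hF.ι_prefixWedge_of_le hC hij, zero_mul, zero_add, hF.ι_eq]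
  by_cases h : (i : ℕ) = j
  · rw [if_pos (Fin.ext h), if_pos h, mul_one]
  · rw [if_neg (fun e => h (by rw [e])), if_neg h, mul_zero, smul_zero]

/-- If `ι (b i) s = 0` then `ι (b i) (s * w i) = ± s`; so induct on `S`, the base case lying
above the top degree `N`. -/
theorem eq_zero_of_ι_eq_zero (hF : IsDualFrame 𝒜 ι L b w)
    (hC : IsCartanCalculus 𝒜 d ι L) {N : ℕ} (htop : ∀ j, N < j → 𝒜 j = ⊥) (S : Finset (Fin k))
    {m : ℕ} {s : A} (hs : s ∈ 𝒜 m) (hS : N < m + S.card) (h : ∀ i ∈ S, ι (b i) s = 0) :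
    s = 0 := by
  induction S using Finset.induction_on generalizing m s with
  | empty => simpa [htop m (by simpa using hS)] using hs
  | @insert i S hi ih =>
    rw [Finset.card_insert_of_notMem hi] at hS
    have hsw : s * w i = 0 := by
      refine ih (SetLike.mul_mem_graded hs (hF.mem i)) (by omega) fun j hj => ?_
      rw [hC.ι_mul _ m _ hs, h j (Finset.mem_insert_of_mem hj), hF.ι_eq,
        if_neg (by rintro rfl; exact hi hj), zero_mul, mul_zero, smul_zero, add_zero]
    have hι := hC.ι_mul (b i) m s hs (w i)
    rw [hsw, map_zero, h i (Finset.mem_insert_self i S), hF.ι_eq, if_pos rfl, zero_mul,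
      zero_add, mul_one, eq_comm] at hι
    rw [← neg_one_pow_smul_neg_one_pow_smul (R := R) m s, hι, smul_zero]

theorem eq_smul_ι_mul_of_ι_eq_zero (hF : IsDualFrame 𝒜 ι L b w)
    (hC : IsCartanCalculus 𝒜 d ι L) {N : ℕ} (htop : ∀ j, N < j → 𝒜 j = ⊥)
    {S : Finset (Fin k)} {j : Fin k} (hj : j ∉ S) {m : ℕ} {x : A} (hx : x ∈ 𝒜 (m + 1))
    (hS : N ≤ m + 1 + S.card) (h : ∀ i ∈ S, ι (b i) x = 0) :
    x = ((-1 : R) ^ m • ι (b j) x) * w j := by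
  set y := (-1 : R) ^ m • ι (b j) x
  have hy : y ∈ 𝒜 m := Submodule.smul_mem _ _ (hC.ι_mem _ m x hx)
  have hιy : ∀ i ∈ insert j S, ι (b i) y = 0 := by
    intro i hi
    rw [map_smul]
    rcases Finset.mem_insert.mp hi with rfl | hi
    · rw [hC.ι_ι, smul_zero]
    · rw [hC.ι_ι_anticomm, h i hi, map_zero, neg_zero, smul_zero]
  rw [← sub_eq_zero]
  refine hF.eq_zero_of_ι_eq_zero hC htop (insert j S)
    (sub_mem hx (SetLike.mul_mem_graded hy (hF.mem j)))
    (by rw [Finset.card_insert_of_notMem hj]; omega) fun i hi => ?_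
  rw [map_sub, hC.ι_mul _ m _ hy, hιy i hi, zero_mul, zero_add, hF.ι_eq]
  rcases Finset.mem_insert.mp hi with rfl | hi
  · rw [if_pos rfl, mul_one, neg_one_pow_smul_neg_one_pow_smul, sub_self]
  · rw [if_neg (fun e : i = j => hj (e ▸ hi)), mul_zero, smul_zero, h i hi, sub_zero]

theorem exists_eq_mul_prefixWedge (hF : IsDualFrame 𝒜 ι L b w) (hC : IsCartanCalculus 𝒜 d ι L)
    {n : ℕ} (htop : ∀ j, n + k < j → 𝒜 j = ⊥) (p : Submodule R A)
    (hp : ∀ i, ∀ x ∈ p, ι (b i) x ∈ p) {j : ℕ} (hj : j ≤ k) {x : A} (hx : x ∈ 𝒜 (n + j))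
    (hxp : x ∈ p) (hxι : ∀ i : Fin k, j ≤ i → ι (b i) x = 0) :
    ∃ β ∈ 𝒜 n, β ∈ p ∧ (∀ i, ι (b i) β = 0) ∧ x = β * prefixWedge w j := by
  induction j generalizing x with
  | zero => exact ⟨x, hx, hxp, fun i => hxι i (Nat.zero_le _), by simp⟩
  | succ j ih =>
    have hjk : j < k := by omega
    set j' : Fin k := ⟨j, hjk⟩
    have hpeel := hF.eq_smul_ι_mul_of_ι_eq_zero hC htop (S := Finset.Ioi j') (j := j')
      (m := n + j) (by simp) hx (by simp [j']; omega)
      (fun i hi => hxι i (by simpa [j', Fin.lt_def] using hi))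
    have hkill : ∀ i : Fin k, j ≤ i → ι (b i) ((-1 : R) ^ (n + j) • ι (b j') x) = 0 := by
      intro i hi
      rw [map_smul]
      by_cases h : (i : ℕ) = j
      · rw [show i = j' from Fin.ext h, hC.ι_ι, smul_zero]
      · rw [hC.ι_ι_anticomm, hxι i (by omega), map_zero, neg_zero, smul_zero]
    obtain ⟨β, hβ, hβp, hβι, hxβ⟩ := ih (by omega) (Submodule.smul_mem _ _ (hC.ι_mem _ _ _ hx))
      (p.smul_mem _ (hp _ _ hxp)) hkill
    exact ⟨β, hβ, hβp, hβι, by rw [hpeel, hxβ, prefixWedge_succ hjk, mul_assoc]⟩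

/-- Contracting a primitive of `β * w₀ ⋯ w_{j}` by `b j` gives, up to sign, an invariant
primitive of `β * w₀ ⋯ w_{j-1}`. -/
theorem exists_invariant_d_eq_mul_prefixWedge (hF : IsDualFrame 𝒜 ι L b w)
    (hC : IsCartanCalculus 𝒜 d ι L) {n : ℕ} {β : A} (hβ : β ∈ 𝒜 n) (hβι : ∀ v, ι v β = 0)
    {z : A} (hz : ∀ v, L v z = 0) (hdz : d z = β * prefixWedge w k) {j : ℕ} (hj : j ≤ k) :
    ∃ z', (∀ v, L v z' = 0) ∧ (∀ i : Fin k, j ≤ i → ι (b i) z' = 0) ∧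
      d z' = β * prefixWedge w j := by
  induction hj using Nat.decreasingInduction with
  | self => exact ⟨z, hz, fun i hi => absurd i.2 (by omega), hdz⟩
  | of_succ j hjk ih =>
    obtain ⟨z, hz, hzι, hdz⟩ := ih
    set j' : Fin k := ⟨j, hjk⟩
    have hdι : d (ι (b j') z) = -((-1 : R) ^ (n + j) • (β * prefixWedge w j)) := by
      rw [← neg_eq_iff_eq_neg, ← hC.ι_d_of_L_eq_zero (hz _), hdz, hC.ι_mul _ n _ hβ, hβι,
        zero_mul, zero_add, hF.ι_prefixWedge_succ hC (i := j') le_rfl, if_pos rfl,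
        mul_smul_comm, smul_smul, ← pow_add]
    refine ⟨-((-1 : R) ^ (n + j) • ι (b j') z), fun v => ?_, fun i hi => ?_, ?_⟩
    · rw [map_neg, map_smul, ← hC.ι_L, hz, map_zero, smul_zero, neg_zero]
    · rw [map_neg, map_smul]
      by_cases h : (i : ℕ) = j
      · rw [show i = j' from Fin.ext h, hC.ι_ι, smul_zero, neg_zero]
      · rw [hC.ι_ι_anticomm, hzι i (by omega), map_zero, neg_zero, smul_zero, neg_zero]
    · rw [map_neg, map_smul, hdι, smul_neg, neg_neg, neg_one_pow_smul_neg_one_pow_smul]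

/-- There is no Leibniz rule for `d`: instead, the difference of the two sides is killed by the
contractions `ι (b i)`, `i ≥ j - 1`, hence vanishes for degree reasons. -/
theorem d_mul_prefixWedge (hF : IsDualFrame 𝒜 ι L b w) (hC : IsCartanCalculus 𝒜 d ι L)
    {m : ℕ} (htop : ∀ j, m + 1 + k < j → 𝒜 j = ⊥) {δ : A} (hδ : δ ∈ 𝒜 m)
    (hdδ : ∀ i, ι (b i) (d δ) = 0)
    (hann : ∀ i (l : ℕ) (x : A), x ∈ 𝒜 (l + 1) → ι (b i) δ * x = 0 ∧ d (ι (b i) δ) * x = 0)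
    {j : ℕ} (hj : j ≤ k) : d (δ * prefixWedge w j) = d δ * prefixWedge w j := by
  induction j with
  | zero => simp
  | succ j ih =>
    set P := prefixWedge w (j + 1)
    have hP : P ∈ 𝒜 (j + 1) := hF.prefixWedge_mem (by omega)
    have hmem : d (δ * P) - d δ * P ∈ 𝒜 (m + 1 + (j + 1)) := by
      refine sub_mem ?_ (SetLike.mul_mem_graded (hC.d_mem _ _ hδ) hP)
      simpa [add_right_comm] using hC.d_mem _ _ (SetLike.mul_mem_graded hδ hP)
    rw [← sub_eq_zero]
    refine hF.eq_zero_of_ι_eq_zero hC htop (Finset.Ici ⟨j, by omega⟩) hmem (by simp; omega)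
      fun i hi => ?_
    have hij : j ≤ i := by simpa [Fin.le_def] using hi
    obtain ⟨hιδ, hdιδ⟩ := hann i j P hP
    have hL : L (b i) (δ * P) = 0 := by
      rw [hC.L_mul, hF.L_prefixWedge hC _ (by omega), mul_zero, add_zero, hC.L_eq, hdδ i,
        add_zero, hdιδ]
    have hιP : d (δ * ι (b i) P) = d δ * ι (b i) P := by
      rw [hF.ι_prefixWedge_succ hC hij]
      split_ifs <;> simp [ih (by omega)]
    rw [map_sub, hC.ι_d_of_L_eq_zero hL, hC.ι_mul _ m _ hδ, hιδ, zero_add,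
      hC.ι_mul _ (m + 1) _ (hC.d_mem _ _ hδ), hdδ i, zero_mul, zero_add, map_smul, hιP, pow_succ,
      mul_neg_one, neg_smul, sub_neg_eq_add, neg_add_cancel]

theorem exists_basic_sub_mul_wedge_eq_d (hF : IsDualFrame 𝒜 ι L b w)
    (hC : IsCartanCalculus 𝒜 d ι L) {n : ℕ} (htop : ∀ j, n + k < j → 𝒜 j = ⊥) {α y z : A}
    (hα : α ∈ 𝒜 (n + k)) (hy : ∀ v, L v y = 0) (hyz : α - y = d z) :
    ∃ β ∈ 𝒜 n, IsBasic ι L β ∧ d β = 0 ∧ ∃ γ, α - β * (List.ofFn w).prod = d γ := by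
  have hclosed : ∀ x ∈ 𝒜 (n + k), d x = 0 := fun x hx => by
    simpa [htop _ (Nat.lt_succ_self _)] using hC.d_mem _ x hx
  rcases k with _ | m
  · exact ⟨α, hα, isBasic_of_basis b (fun i => i.elim0) (b.apply_apply_eq_zero fun i => i.elim0),
      hclosed α hα, 0, by simp⟩
  rw [← add_assoc] at hα htop hclosed
  set y' := proj 𝒜 (n + m + 1) y
  have hy0 : proj 𝒜 0 y = 0 := by
    rw [show y = α - d z by rw [← hyz, sub_sub_cancel], map_sub, hC.proj_zero_d,
      proj_of_mem_ne 𝒜 hα (by omega), sub_zero]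
  have hy' : y' ∈ invariantCocycles d L := mem_invariantCocycles.mpr
    ⟨hclosed _ (proj_mem 𝒜 _ y),
      fun v => by rw [← hC.proj_L_of_proj_zero_eq_zero v hy0, hy, map_zero]⟩
  obtain ⟨β, hβ, hβp, hβι, hy'β⟩ := hF.exists_eq_mul_prefixWedge hC htop _
    (fun i _ => hC.ι_mem_invariantCocycles (b i)) le_rfl (proj_mem 𝒜 (n + m + 1) y) hy'
    (fun i hi => absurd i.2 (by omega))
  obtain ⟨hdβ, hLβ⟩ := mem_invariantCocycles.mp hβp
  refine ⟨β, hβ, isBasic_of_basis b hβι hLβ, hdβ, proj 𝒜 (n + m) z, ?_⟩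
  rw [← prefixWedge_self, ← hy'β, ← hC.proj_succ_d, ← hyz, map_sub, proj_of_mem 𝒜 hα]

theorem exists_basic_d_eq (hF : IsDualFrame 𝒜 ι L b w) (hC : IsCartanCalculus 𝒜 d ι L) {n : ℕ}
    {β z : A} (hβ : β ∈ 𝒜 n) (hβb : IsBasic ι L β) (hz : ∀ v, L v z = 0)
    (hdz : d z = β * (List.ofFn w).prod) : ∃ δ, IsBasic ι L δ ∧ d δ = β := by
  obtain ⟨δ, hδL, hδι, hdδ⟩ := hF.exists_invariant_d_eq_mul_prefixWedge hC hβ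
    (fun v => (hβb v).1) hz (by rwa [prefixWedge_self]) (Nat.zero_le k)
  exact ⟨δ, isBasic_of_basis b (fun i => hδι i (Nat.zero_le _)) hδL, by simpa using hdδ⟩

theorem exists_mul_wedge_eq_d (hF : IsDualFrame 𝒜 ι L b w) (hC : IsCartanCalculus 𝒜 d ι L)
    {n : ℕ} (htop : ∀ j, n + k < j → 𝒜 j = ⊥) {β δ : A} (hβ : β ∈ 𝒜 n)
    (hβι : ∀ v, ι v β = 0) (hδ : ∀ v, ι v δ = 0) (hdδ : d δ = β) :
    ∃ γ, β * (List.ofFn w).prod = d γ := by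
  rcases n with _ | m
  · refine ⟨0, ?_⟩
    rw [← proj_of_mem 𝒜 hβ, ← hdδ, hC.proj_zero_d, zero_mul, map_zero]
  have hd : d (proj 𝒜 m δ) = β := by rw [← hC.proj_succ_d, hdδ, proj_of_mem 𝒜 hβ]
  refine ⟨proj 𝒜 m δ * (List.ofFn w).prod, ?_⟩
  rw [← prefixWedge_self, hF.d_mul_prefixWedge hC htop (proj_mem 𝒜 m δ)
    (fun i => by rw [hd]; exact hβι _)
    (fun i l x hx => hC.ι_proj_mul_eq_zero (hδ _) (by rw [hdδ]; exact hβι _) m hx) le_rfl, hd]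

end IsDualFrame

end CartanCalculus

theorem stmt_9_general
    (n k : ℕ)
    {A : Type*} [Ring A] [Algebra ℝ A]
    (𝒜 : ℕ → Submodule ℝ A) [GradedRing 𝒜]
    (d : A →ₗ[ℝ] A)
    (hddeg : ∀ m : ℕ, ∀ a ∈ 𝒜 m, d a ∈ 𝒜 (m + 1))
    -- `dim M = n + k`
    (htop : ∀ j : ℕ, n + k < j → 𝒜 j = ⊥)
    {hh : Type*} [AddCommGroup hh] [Module ℝ hh]
    (b : Module.Basis (Fin k) ℝ hh)
    (ι L : hh →ₗ[ℝ] Module.End ℝ A)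
    -- Cartan calculus
    (hι2 : ∀ v, ι v ∘ₗ ι v = 0)
    (hιL : ∀ v u : hh, ι v ∘ₗ L u = L u ∘ₗ ι v)
    (hcartan : ∀ v, L v = d ∘ₗ ι v + ι v ∘ₗ d)
    (hιdeg : ∀ (v : hh) (m : ℕ), ∀ a ∈ 𝒜 (m + 1), ι v a ∈ 𝒜 m)
    (hιder : ∀ (v : hh) (m : ℕ), ∀ a ∈ 𝒜 m, ∀ x : A,
      ι v (a * x) = ι v a * x + ((-1 : ℝ) ^ m) • (a * ι v x))
    (hLder : ∀ (v : hh) (a x : A), L v (a * x) = L v a * x + a * L v x)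
    -- the basis `w₁, …, w_k` of `W ⊆ Ω¹(M)^H`
    (w : Fin k → A) (hwdeg : ∀ i, w i ∈ 𝒜 1)
    (hwinv : ∀ (i : Fin k) (v : hh), L v (w i) = 0)
    -- the pairing is non-degenerate : `w` is dual to the basis `b` of `h`
    (hpair : ∀ i j : Fin k, ι (b i) (w j) = if i = j then (1 : A) else 0)
    -- compactness : the inclusion of invariant forms is a quasi-isomorphism
    (hqis₁ : ∀ a : A, d a = 0 → ∃ y : A, (∀ v : hh, L v y = 0) ∧ ∃ z, a - y = d z)
    (hqis₂ : ∀ y : A, (∀ v : hh, L v y = 0) → d y = 0 → (∃ z, y = d z) →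
      ∃ z, (∀ v : hh, L v z = 0) ∧ d z = y)
    -- orientability : the top de Rham cohomology of `M` does not vanish
    (hor : ∃ α ∈ 𝒜 (n + k), ∀ γ : A, α ≠ d γ) :
    let wedge : A := (List.ofFn w).prod
    let Basic : A → Prop := fun x => ∀ v : hh, ι v x = 0 ∧ L v x = 0
    -- surjectivity of `H^n_B(M) → H^{n+k}(M)`, `β ↦ β ∧ w₁ ∧ ⋯ ∧ w_k`
    ((∀ α ∈ 𝒜 (n + k), ∃ β ∈ 𝒜 n, Basic β ∧ d β = 0 ∧ ∃ γ, α - β * wedge = d γ) ∧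
    -- injectivity
    (∀ β ∈ 𝒜 n, Basic β → d β = 0 → (∃ γ, β * wedge = d γ) →
      ∃ δ : A, Basic δ ∧ d δ = β) ∧
    -- in particular the foliation is homologically oriented : `H^n_B(M) ≠ 0`
    (∃ β ∈ 𝒜 n, Basic β ∧ d β = 0 ∧ ∀ δ : A, Basic δ → d δ ≠ β)) := by
  intro wedge Basic
  have hC : IsCartanCalculus 𝒜 d ι L :=
    { d_mem := hddeg
      ι_ι := fun v x => by simpa using LinearMap.congr_fun (hι2 v) x
      ι_L := fun v u x => by simpa using LinearMap.congr_fun (hιL v u) x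
      L_eq := fun v x => by simpa using LinearMap.congr_fun (hcartan v) x
      ι_mem := hιdeg
      ι_mul := hιder
      L_mul := hLder }
  have hF : IsDualFrame 𝒜 ι L b w := ⟨hwdeg, fun v i => hwinv i v, hpair⟩
  have hclosed : ∀ x ∈ 𝒜 (n + k), d x = 0 := fun x hx => by
    simpa [htop _ (Nat.lt_succ_self _)] using hddeg _ x hx
  have surj : ∀ α ∈ 𝒜 (n + k), ∃ β ∈ 𝒜 n, Basic β ∧ d β = 0 ∧ ∃ γ, α - β * wedge = d γ := by
    intro α hα
    obtain ⟨y, hy, z, hyz⟩ := hqis₁ α (hclosed α hα)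
    exact hF.exists_basic_sub_mul_wedge_eq_d hC htop hα hy hyz
  refine ⟨surj, fun β hβ hβb _ hexact => ?_, ?_⟩
  · have hwedge : wedge = prefixWedge w k := prefixWedge_self.symm
    have hL : ∀ v, L v (β * wedge) = 0 := fun v => by
      rw [hLder, (hβb v).2, hwedge, hF.L_prefixWedge hC v le_rfl, zero_mul, mul_zero, add_zero]
    have hmem : β * wedge ∈ 𝒜 (n + k) :=
      SetLike.mul_mem_graded hβ (hwedge ▸ hF.prefixWedge_mem le_rfl)
    obtain ⟨z, hz, hdz⟩ := hqis₂ _ hL (hclosed _ hmem) hexact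
    exact hF.exists_basic_d_eq hC hβ hβb hz hdz
  · obtain ⟨α, hα, hαne⟩ := hor
    obtain ⟨β, hβ, hβb, hdβ, γ, hγ⟩ := surj α hα
    refine ⟨β, hβ, hβb, hdβ, fun δ hδ hdδ => ?_⟩
    obtain ⟨τ, hτ⟩ :=
      hF.exists_mul_wedge_eq_d hC htop hβ (fun v => (hβb v).1) (fun v => (hδ v).1) hdδ
    exact hαne (γ + τ) (by rw [map_add, ← hγ, ← hτ, sub_add_cancel])

/-- Let `M` be a compact oriented manifold of dimension `n + k` with
a locally free action of a connected abelian group `H`, `dim h = k`, and let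
`W ⊆ Ω¹(M)^H` with basis `w₁, …, w_k` satisfy `dW ⊆ Ω²_B(M)` and non-degenerate
pairing with `h`.  Then wedging with `w₁ ∧ ⋯ ∧ w_k` induces an isomorphism
`H^n_B(M) ≅ H^{n+k}(M)`; in particular the foliation by `H`-orbits is homologically
oriented (`H^n_B(M) ≠ 0`).

The de Rham algebra is abstracted as in the Cartan-calculus setting; compactness of
the closure of `H` enters through the hypothesis that the inclusion of invariant
forms is a quasi-isomorphism (averaging), and orientability through the
non-vanishing of the top de Rham cohomology. -/
theorem stmt_9
    (n k : ℕ)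
    {A : Type*} [Ring A] [Algebra ℝ A]
    (𝒜 : ℕ → Submodule ℝ A) [GradedRing 𝒜]
    (d : A →ₗ[ℝ] A) (hd2 : d ∘ₗ d = 0)
    (hddeg : ∀ m : ℕ, ∀ a ∈ 𝒜 m, d a ∈ 𝒜 (m + 1))
    -- `dim M = n + k`
    (htop : ∀ j : ℕ, n + k < j → 𝒜 j = ⊥)
    {hh : Type*} [AddCommGroup hh] [Module ℝ hh]
    (b : Module.Basis (Fin k) ℝ hh)
    (ι L : hh →ₗ[ℝ] Module.End ℝ A)
    -- Cartan calculus
    (hι2 : ∀ v, ι v ∘ₗ ι v = 0)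
    (hιL : ∀ v u : hh, ι v ∘ₗ L u = L u ∘ₗ ι v)
    (hcartan : ∀ v, L v = d ∘ₗ ι v + ι v ∘ₗ d)
    (hιdeg : ∀ (v : hh) (m : ℕ), ∀ a ∈ 𝒜 (m + 1), ι v a ∈ 𝒜 m)
    (hιder : ∀ (v : hh) (m : ℕ), ∀ a ∈ 𝒜 m, ∀ x : A,
      ι v (a * x) = ι v a * x + ((-1 : ℝ) ^ m) • (a * ι v x))
    (hLder : ∀ (v : hh) (a x : A), L v (a * x) = L v a * x + a * L v x)
    -- the basis `w₁, …, w_k` of `W ⊆ Ω¹(M)^H`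
    (w : Fin k → A) (hwdeg : ∀ i, w i ∈ 𝒜 1)
    (hwinv : ∀ (i : Fin k) (v : hh), L v (w i) = 0)
    (hdw : ∀ (i : Fin k) (v : hh), ι v (d (w i)) = 0 ∧ L v (d (w i)) = 0)
    (hdwdeg : ∀ i, d (w i) ∈ 𝒜 2)
    -- the pairing is non-degenerate : `w` is dual to the basis `b` of `h`
    (hpair : ∀ i j : Fin k, ι (b i) (w j) = if i = j then (1 : A) else 0)
    -- compactness : the inclusion of invariant forms is a quasi-isomorphism
    (hqis₁ : ∀ a : A, d a = 0 → ∃ y : A, (∀ v : hh, L v y = 0) ∧ ∃ z, a - y = d z)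
    (hqis₂ : ∀ y : A, (∀ v : hh, L v y = 0) → d y = 0 → (∃ z, y = d z) →
      ∃ z, (∀ v : hh, L v z = 0) ∧ d z = y)
    -- orientability : the top de Rham cohomology of `M` does not vanish
    (hor : ∃ α ∈ 𝒜 (n + k), ∀ γ : A, α ≠ d γ) :
    let wedge : A := (List.ofFn w).prod
    let Basic : A → Prop := fun x => ∀ v : hh, ι v x = 0 ∧ L v x = 0
    -- surjectivity of `H^n_B(M) → H^{n+k}(M)`, `β ↦ β ∧ w₁ ∧ ⋯ ∧ w_k`
    ((∀ α ∈ 𝒜 (n + k), ∃ β ∈ 𝒜 n, Basic β ∧ d β = 0 ∧ ∃ γ, α - β * wedge = d γ) ∧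
    -- injectivity
    (∀ β ∈ 𝒜 n, Basic β → d β = 0 → (∃ γ, β * wedge = d γ) →
      ∃ δ : A, Basic δ ∧ d δ = β) ∧
    -- in particular the foliation is homologically oriented : `H^n_B(M) ≠ 0`
    (∃ β ∈ 𝒜 n, Basic β ∧ d β = 0 ∧ ∀ δ : A, Basic δ → d δ ≠ β)) :=
  stmt_9_general n k 𝒜 d hddeg htop b ι L hι2 hιL hcartan hιdeg hιder hLder w hwdeg hwinv hpair
    hqis₁ hqis₂ hor
end

section
/- Let V be a finite-dimensional real vector space with an R-mixed Hodge structure (W_*, F^*). Define R_{p,q} = W_{p+q}(V_C) ∩ F^p(V_C) and L_{p,q} = W_{p+q}(V_C) ∩ conj(F^q(V_C)) + Σ_{i≥2} W_{p+q−i}(V_C) ∩ conj(F^{q−i+1}(V_C)), and V_{p,q} = R_{p,q} ∩ L_{p,q}. Then V_C = ⊕ V_{p,q}, with W_n(V_C) = ⊕_{p+q≤n} V_{p,q}, F^r(V_C) = ⊕_{p≥r} V_{p,q}, and conj(V_{p,q}) ≡ V_{q,p} modulo ⊕_{r+s<p+q} V_{r,s}. -/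
namespace Stmt11

variable {V : Type*} [AddCommGroup V] [Module ℂ V]

section Defs

variable (W F Fbar : ℤ → Submodule ℂ V)

/-- `Mds m s = Σ_{j ≥ 0} W_{m-j} ∩ Fbar^{s-j}`. -/
def Mds (m s : ℤ) : Submodule ℂ V := ⨆ j : ℕ, W (m - (j : ℤ)) ⊓ Fbar (s - (j : ℤ))

/-- `L_{p,q}` from the statement. -/
def Lpq (p q : ℤ) : Submodule ℂ V :=
  (W (p + q) ⊓ Fbar q) ⊔ ⨆ (i : ℕ) (_ : 2 ≤ i), W (p + q - (i : ℤ)) ⊓ Fbar (q - (i : ℤ) + 1)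

/-- `I^{p,q} = R_{p,q} ∩ L_{p,q}`. -/
def Ipq (p q : ℤ) : Submodule ℂ V := (W (p + q) ⊓ F p) ⊓ Lpq W Fbar p q

/-- `Spn n p = Σ_{r+s ≤ n, r ≥ p} I^{r,s}`. -/
def Spn (n p : ℤ) : Submodule ℂ V :=
  ⨆ (rs : ℤ × ℤ) (_ : rs.1 + rs.2 ≤ n ∧ p ≤ rs.1), Ipq W F Fbar rs.1 rs.2

end Defs

section Basic

variable {σ : V →ₗ[ℝ] V} {W F Fbar : ℤ → Submodule ℂ V}

theorem mem_Fbar (hFbar : ∀ p : ℤ, (Fbar p : Set V) = σ '' (F p)) {s : ℤ} {x : V} :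
    x ∈ Fbar s ↔ ∃ y ∈ F s, σ y = x := by
  constructor
  · intro h
    have hx : x ∈ (Fbar s : Set V) := h
    rw [hFbar] at hx
    obtain ⟨y, hy, hyx⟩ := hx
    exact ⟨y, hy, hyx⟩
  · rintro ⟨y, hy, rfl⟩
    have : σ y ∈ (Fbar s : Set V) := by rw [hFbar]; exact ⟨y, hy, rfl⟩
    exact this

theorem Fbar_anti (hFanti : Antitone F) (hFbar : ∀ p : ℤ, (Fbar p : Set V) = σ '' (F p)) :
    Antitone Fbar := by
  intro s t hst x hx
  rw [mem_Fbar hFbar] at hx ⊢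
  obtain ⟨y, hy, rfl⟩ := hx
  exact ⟨y, hFanti hst hy, rfl⟩

theorem Fbar_bot (hFbar : ∀ p : ℤ, (Fbar p : Set V) = σ '' (F p)) {c : ℤ} (hc : F c = ⊥) :
    Fbar c = ⊥ := by
  rw [eq_bot_iff]
  intro x hx
  rw [mem_Fbar hFbar] at hx
  obtain ⟨y, hy, rfl⟩ := hx
  rw [hc, Submodule.mem_bot] at hy
  subst hy
  rw [map_zero]
  exact zero_mem _

theorem sigma_mem_Fbar (hFbar : ∀ p : ℤ, (Fbar p : Set V) = σ '' (F p)) {s : ℤ} {x : V}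
    (hx : x ∈ F s) : σ x ∈ Fbar s :=
  (mem_Fbar hFbar).mpr ⟨x, hx, rfl⟩

theorem sigma_mem_F (hσσ : ∀ x : V, σ (σ x) = x)
    (hFbar : ∀ p : ℤ, (Fbar p : Set V) = σ '' (F p)) {s : ℤ} {x : V}
    (hx : x ∈ Fbar s) : σ x ∈ F s := by
  rw [mem_Fbar hFbar] at hx
  obtain ⟨y, hy, rfl⟩ := hx
  rw [hσσ]
  exact hy

theorem mem_Ipq {p q : ℤ} {x : V} :
    x ∈ Ipq W F Fbar p q ↔ x ∈ W (p + q) ⊓ F p ∧ x ∈ Lpq W Fbar p q :=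
  Submodule.mem_inf

theorem Mds_le {m s : ℤ} {K : Submodule ℂ V}
    (h : ∀ j : ℕ, W (m - (j : ℤ)) ⊓ Fbar (s - (j : ℤ)) ≤ K) : Mds W Fbar m s ≤ K := by
  unfold Mds
  exact iSup_le h

theorem le_Mds {m s : ℤ} (j : ℕ) :
    W (m - (j : ℤ)) ⊓ Fbar (s - (j : ℤ)) ≤ Mds W Fbar m s := by
  unfold Mds
  exact le_iSup (fun j : ℕ => W (m - (j : ℤ)) ⊓ Fbar (s - (j : ℤ))) j

theorem Mds_le_W (hWmono : Monotone W) (m s : ℤ) : Mds W Fbar m s ≤ W m :=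
  Mds_le fun j => inf_le_left.trans (hWmono (by omega))

theorem Mds_succ (m s : ℤ) :
    Mds W Fbar m s = (W m ⊓ Fbar s) ⊔ Mds W Fbar (m - 1) (s - 1) := by
  apply le_antisymm
  · apply Mds_le
    intro j
    cases j with
    | zero => simp only [Nat.cast_zero, sub_zero]; exact le_sup_left
    | succ j =>
      have e1 : m - ((j + 1 : ℕ) : ℤ) = (m - 1) - (j : ℤ) := by push_cast; ring
      have e2 : s - ((j + 1 : ℕ) : ℤ) = (s - 1) - (j : ℤ) := by push_cast; ring
      rw [e1, e2]
      exact le_sup_of_le_right (le_Mds j)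
  · apply sup_le
    · simpa using le_Mds (W := W) (Fbar := Fbar) (m := m) (s := s) 0
    · apply Mds_le
      intro j
      have e1 : (m - 1) - (j : ℤ) = m - ((j + 1 : ℕ) : ℤ) := by push_cast; ring
      have e2 : (s - 1) - (j : ℤ) = s - ((j + 1 : ℕ) : ℤ) := by push_cast; ring
      rw [e1, e2]
      exact le_Mds (j + 1)

theorem Lpq_eq (p q : ℤ) :
    Lpq W Fbar p q = (W (p + q) ⊓ Fbar q) ⊔ Mds W Fbar (p + q - 2) (q - 1) := by
  unfold Lpq
  congr 1
  apply le_antisymm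
  · apply iSup₂_le
    intro i hi
    obtain ⟨j, rfl⟩ : ∃ j : ℕ, i = j + 2 := ⟨i - 2, by omega⟩
    have e1 : p + q - ((j + 2 : ℕ) : ℤ) = (p + q - 2) - (j : ℤ) := by push_cast; ring
    have e2 : q - ((j + 2 : ℕ) : ℤ) + 1 = (q - 1) - (j : ℤ) := by push_cast; ring
    rw [e1, e2]
    exact le_Mds j
  · apply Mds_le
    intro j
    have e1 : (p + q - 2) - (j : ℤ) = p + q - ((j + 2 : ℕ) : ℤ) := by push_cast; ring
    have e2 : (q - 1) - (j : ℤ) = q - ((j + 2 : ℕ) : ℤ) + 1 := by push_cast; ring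
    rw [e1, e2]
    exact le_iSup₂_of_le (j + 2) (by omega) le_rfl

end Basic

section Core

variable {σ : V →ₗ[ℝ] V} {W F Fbar : ℤ → Submodule ℂ V}

theorem pairInf
    (hodge : ∀ n p : ℤ,
      (W n ⊓ F p) ⊔ (W n ⊓ Fbar (n + 1 - p)) ⊔ W (n - 1) = W n ∧
      (W n ⊓ F p) ⊓ ((W n ⊓ Fbar (n + 1 - p)) ⊔ W (n - 1)) ≤ W (n - 1))
    (hFb : Antitone Fbar) {n p s : ℤ} (hs : n + 1 - p ≤ s) :
    (W n ⊓ F p) ⊓ ((W n ⊓ Fbar s) ⊔ W (n - 1)) ≤ W (n - 1) := by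
  refine le_trans ?_ (hodge n p).2
  exact inf_le_inf_left _ (sup_le_sup_right (inf_le_inf_left _ (hFb hs)) _)

theorem zeroLem
    (hodge : ∀ n p : ℤ,
      (W n ⊓ F p) ⊔ (W n ⊓ Fbar (n + 1 - p)) ⊔ W (n - 1) = W n ∧
      (W n ⊓ F p) ⊓ ((W n ⊓ Fbar (n + 1 - p)) ⊔ W (n - 1)) ≤ W (n - 1))
    (hWmono : Monotone W) (hFb : Antitone Fbar) {a : ℤ} (ha : W a = ⊥) :
    ∀ m s p : ℤ, m + 1 ≤ p + s → F p ⊓ Mds W Fbar m s = ⊥ := by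
  have key : ∀ k : ℕ, ∀ m s p : ℤ, m ≤ a + k → m + 1 ≤ p + s →
      F p ⊓ Mds W Fbar m s = ⊥ := by
    intro k
    induction k with
    | zero =>
      intro m s p hm _
      rw [eq_bot_iff]
      calc F p ⊓ Mds W Fbar m s ≤ W m := inf_le_right.trans (Mds_le_W hWmono m s)
        _ ≤ W a := hWmono (by omega)
        _ = ⊥ := ha
    | succ k ih =>
      intro m s p hm hps
      by_cases h : m ≤ a + k
      · exact ih m s p h hps
      rw [eq_bot_iff]
      intro v hv
      obtain ⟨hvF, hvM⟩ := Submodule.mem_inf.mp hv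
      rw [Mds_succ] at hvM
      obtain ⟨b, hb, cc, hcc, hbc⟩ := Submodule.mem_sup.mp hvM
      obtain ⟨hbW, hbFb⟩ := Submodule.mem_inf.mp hb
      have hccW : cc ∈ W (m - 1) := Mds_le_W hWmono _ _ hcc
      have hvW : v ∈ W m := by
        rw [← hbc]; exact add_mem hbW (hWmono (by omega) hccW)
      have hvW1 : v ∈ W (m - 1) := by
        apply pairInf hodge hFb (show m + 1 - p ≤ s by omega)
        exact Submodule.mem_inf.mpr ⟨Submodule.mem_inf.mpr ⟨hvW, hvF⟩,
          Submodule.mem_sup.mpr ⟨b, hb, cc, hccW, hbc⟩⟩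
      have hbW1 : b ∈ W (m - 1) := by
        have hb' : b = v - cc := eq_sub_of_add_eq hbc
        rw [hb']; exact sub_mem hvW1 hccW
      have hbM : b ∈ Mds W Fbar (m - 1) (s - 1) := by
        simpa using le_Mds (W := W) (Fbar := Fbar) (m := m - 1) (s := s - 1) 0
          (Submodule.mem_inf.mpr ⟨by simpa using hbW1, by simpa using hFb (by omega : s - 1 ≤ s) hbFb⟩)
      have hvM' : v ∈ Mds W Fbar (m - 1) (s - 1) := by
        rw [← hbc]; exact add_mem hbM hcc
      have hres := ih (m - 1) (s - 1) p (by omega) (by omega)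
      have : v ∈ F p ⊓ Mds W Fbar (m - 1) (s - 1) := Submodule.mem_inf.mpr ⟨hvF, hvM'⟩
      rw [hres] at this
      exact this
  intro m s p h
  exact key (m - a).toNat m s p (by omega) h

theorem Ipq_le_WF {p q : ℤ} : Ipq W F Fbar p q ≤ W (p + q) ⊓ F p := inf_le_left

theorem Ipq_le_L {p q : ℤ} : Ipq W F Fbar p q ≤ Lpq W Fbar p q := inf_le_right

theorem WFbar_le_L (hWmono : Monotone W) (hFb : Antitone Fbar) {p q m' s' : ℤ}
    (h1 : m' - s' ≤ p - 1) (h2 : m' ≤ p + q - 1) :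
    W m' ⊓ Fbar s' ≤ Lpq W Fbar p q := by
  by_cases hs : q ≤ s'
  · exact le_sup_of_le_left (inf_le_inf (hWmono (by omega)) (hFb hs))
  · push_neg at hs
    set i : ℕ := (q - s' + 1).toNat with hi
    have hi2 : (2 : ℕ) ≤ i := by omega
    have hiz : (i : ℤ) = q - s' + 1 := by omega
    refine le_sup_of_le_right (le_iSup₂_of_le i hi2 ?_)
    rw [show p + q - (i : ℤ) = p + s' - 1 by omega, show q - (i : ℤ) + 1 = s' by omega]
    exact inf_le_inf (hWmono (by omega)) le_rfl

theorem Ipq_le_Lpq_of_lt (hWmono : Monotone W) (hFb : Antitone Fbar) {p q r s : ℤ}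
    (hr : r ≤ p - 1) (hw : r + s ≤ p + q - 1) :
    Ipq W F Fbar r s ≤ Lpq W Fbar p q := by
  refine Ipq_le_L.trans ?_
  rw [Lpq_eq]
  apply sup_le
  · exact WFbar_le_L hWmono hFb (by omega) (by omega)
  · exact Mds_le fun j => WFbar_le_L hWmono hFb (by omega) (by omega)

theorem Ipq_inf_W
    (hodge : ∀ n p : ℤ,
      (W n ⊓ F p) ⊔ (W n ⊓ Fbar (n + 1 - p)) ⊔ W (n - 1) = W n ∧
      (W n ⊓ F p) ⊓ ((W n ⊓ Fbar (n + 1 - p)) ⊔ W (n - 1)) ≤ W (n - 1))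
    (hWmono : Monotone W) (hFb : Antitone Fbar) {a : ℤ} (ha : W a = ⊥) (p q : ℤ) :
    Ipq W F Fbar p q ⊓ W (p + q - 1) = ⊥ := by
  rw [eq_bot_iff]
  intro v hv
  obtain ⟨hvI, hvW1⟩ := Submodule.mem_inf.mp hv
  obtain ⟨hvR, hvL⟩ := mem_Ipq.mp hvI
  obtain ⟨hvW, hvF⟩ := Submodule.mem_inf.mp hvR
  rw [Lpq_eq] at hvL
  obtain ⟨b, hb, cc, hcc, hbc⟩ := Submodule.mem_sup.mp hvL
  obtain ⟨hbW, hbFb⟩ := Submodule.mem_inf.mp hb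
  have hccW : cc ∈ W (p + q - 2) := Mds_le_W hWmono _ _ hcc
  have hbW1 : b ∈ W (p + q - 1) := by
    have hb' : b = v - cc := eq_sub_of_add_eq hbc
    rw [hb']; exact sub_mem hvW1 (hWmono (by omega) hccW)
  have hvW2 : v ∈ W (p + q - 2) := by
    have := pairInf hodge hFb (show (p + q - 1) + 1 - p ≤ q by omega)
      (Submodule.mem_inf.mpr ⟨Submodule.mem_inf.mpr ⟨hvW1, hvF⟩,
        Submodule.mem_sup.mpr ⟨b, Submodule.mem_inf.mpr ⟨hbW1, hbFb⟩, cc,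
          by rw [show p + q - 1 - 1 = p + q - 2 by ring]; exact hccW, hbc⟩⟩)
    rwa [show p + q - 1 - 1 = p + q - 2 by ring] at this
  have hbW2 : b ∈ W (p + q - 2) := by
    have hb' : b = v - cc := eq_sub_of_add_eq hbc
    rw [hb']; exact sub_mem hvW2 hccW
  have hbM : b ∈ Mds W Fbar (p + q - 2) (q - 1) := by
    simpa using le_Mds (W := W) (Fbar := Fbar) (m := p + q - 2) (s := q - 1) 0
      (Submodule.mem_inf.mpr ⟨by simpa using hbW2, by simpa using hFb (by omega : q - 1 ≤ q) hbFb⟩)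
  have hvM : v ∈ Mds W Fbar (p + q - 2) (q - 1) := by rw [← hbc]; exact add_mem hbM hcc
  have hres := zeroLem hodge hWmono hFb ha (p + q - 2) (q - 1) p (by omega)
  have : v ∈ F p ⊓ Mds W Fbar (p + q - 2) (q - 1) := Submodule.mem_inf.mpr ⟨hvF, hvM⟩
  rw [hres] at this
  exact this

theorem Ipq_bot_p (hFanti : Antitone F) {c : ℤ} (hc : F c = ⊥) {p q : ℤ} (hp : c ≤ p) :
    Ipq W F Fbar p q = ⊥ := by
  rw [eq_bot_iff]
  refine le_trans (Ipq_le_WF.trans (inf_le_right.trans (hFanti hp))) ?_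
  rw [hc]

theorem Ipq_bot_s
    (hodge : ∀ n p : ℤ,
      (W n ⊓ F p) ⊔ (W n ⊓ Fbar (n + 1 - p)) ⊔ W (n - 1) = W n ∧
      (W n ⊓ F p) ⊓ ((W n ⊓ Fbar (n + 1 - p)) ⊔ W (n - 1)) ≤ W (n - 1))
    (hWmono : Monotone W) (hFb : Antitone Fbar)
    (hFbar : ∀ p : ℤ, (Fbar p : Set V) = σ '' (F p))
    {a c : ℤ} (ha : W a = ⊥) (hc : F c = ⊥) {p s : ℤ} (hs : c ≤ s) :
    Ipq W F Fbar p s = ⊥ := by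
  rw [eq_bot_iff]
  intro v hv
  obtain ⟨hvR, hvL⟩ := mem_Ipq.mp hv
  rw [Lpq_eq] at hvL
  have hFbs : Fbar s = ⊥ := by
    rw [eq_bot_iff]
    exact (hFb hs).trans (Fbar_bot hFbar hc).le
  rw [hFbs, inf_bot_eq, bot_sup_eq] at hvL
  have hres := zeroLem hodge hWmono hFb ha (p + s - 2) (s - 1) p (by omega)
  have : v ∈ F p ⊓ Mds W Fbar (p + s - 2) (s - 1) :=
    Submodule.mem_inf.mpr ⟨(Submodule.mem_inf.mp hvR).2, hvL⟩
  rw [hres] at this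
  exact this

theorem Ipq_bot_low
    (hodge : ∀ n p : ℤ,
      (W n ⊓ F p) ⊔ (W n ⊓ Fbar (n + 1 - p)) ⊔ W (n - 1) = W n ∧
      (W n ⊓ F p) ⊓ ((W n ⊓ Fbar (n + 1 - p)) ⊔ W (n - 1)) ≤ W (n - 1))
    (hWmono : Monotone W) (hFb : Antitone Fbar)
    (hFbar : ∀ p : ℤ, (Fbar p : Set V) = σ '' (F p))
    {a c : ℤ} (ha : W a = ⊥) (hc : F c = ⊥) {r s : ℤ} (hr : r ≤ a + 1 - c) :
    Ipq W F Fbar r s = ⊥ := by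
  by_cases hs : c ≤ s
  · exact Ipq_bot_s hodge hWmono hFb hFbar ha hc hs
  · push_neg at hs
    rw [eq_bot_iff]
    refine le_trans (Ipq_le_WF.trans (inf_le_left.trans (hWmono (show r + s ≤ a by omega)))) ?_
    rw [ha]

end Core

section Span

variable {σ : V →ₗ[ℝ] V} {W F Fbar : ℤ → Submodule ℂ V}

theorem Ipq_le_Spn {n p p' q' : ℤ} (hw : p' + q' ≤ n) (hp : p ≤ p') :
    Ipq W F Fbar p' q' ≤ Spn W F Fbar n p := by
  unfold Spn
  exact le_iSup_of_le (p', q') (le_iSup_of_le ⟨hw, hp⟩ le_rfl)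

theorem Spn_le {n p : ℤ} {K : Submodule ℂ V}
    (h : ∀ r s : ℤ, r + s ≤ n → p ≤ r → Ipq W F Fbar r s ≤ K) :
    Spn W F Fbar n p ≤ K := by
  unfold Spn
  exact iSup₂_le fun rs hrs => h rs.1 rs.2 hrs.1 hrs.2

theorem Spn_le_WF (hWmono : Monotone W) (hFanti : Antitone F) (n p : ℤ) :
    Spn W F Fbar n p ≤ W n ⊓ F p :=
  Spn_le fun r s hw hp => le_inf
    (Ipq_le_WF.trans (inf_le_left.trans (hWmono hw)))
    (Ipq_le_WF.trans (inf_le_right.trans (hFanti hp)))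

theorem Spn_mono_n {n n' p : ℤ} (h : n ≤ n') : Spn W F Fbar n p ≤ Spn W F Fbar n' p :=
  Spn_le fun _ _ hw hp => Ipq_le_Spn (by omega) hp

theorem Spn_anti_p {n p p' : ℤ} (h : p' ≤ p) : Spn W F Fbar n p ≤ Spn W F Fbar n p' :=
  Spn_le fun _ _ hw hp => Ipq_le_Spn hw (by omega)

theorem lift (hWmono : Monotone W) (hFanti : Antitone F) (hFb : Antitone Fbar)
    {pt : ℤ} (hpt : F pt = ⊤) (p q : ℤ)
    (hprev : ∀ p' : ℤ, W (p + q - 1) ⊓ F p' = Spn W F Fbar (p + q - 1) p') :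
    (W (p + q) ⊓ F p) ⊓ ((W (p + q) ⊓ Fbar q) ⊔ W (p + q - 1)) ≤
      Ipq W F Fbar p q ⊔ (W (p + q - 1) ⊓ F p) := by
  intro v hv
  obtain ⟨hvR, hv2⟩ := Submodule.mem_inf.mp hv
  obtain ⟨hvW, hvF⟩ := Submodule.mem_inf.mp hvR
  obtain ⟨b, hb, cc, hcc, hbc⟩ := Submodule.mem_sup.mp hv2
  set pm := min pt p with hpm
  have hWn1 : W (p + q - 1) ≤ Spn W F Fbar (p + q - 1) p ⊔
      ⨆ (rs : ℤ × ℤ) (_ : rs.1 + rs.2 ≤ p + q - 1 ∧ rs.1 ≤ p - 1), Ipq W F Fbar rs.1 rs.2 := by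
    have hFpm : F pm = ⊤ := eq_top_iff.mpr (hpt ▸ hFanti (min_le_left _ _))
    have h1 : W (p + q - 1) = Spn W F Fbar (p + q - 1) pm := by
      rw [← hprev pm, hFpm, inf_top_eq]
    rw [h1]
    apply Spn_le
    intro r s hw hpr
    by_cases hP : p ≤ r
    · exact le_sup_of_le_left (Ipq_le_Spn hw hP)
    · exact le_sup_of_le_right (le_iSup₂_of_le (r, s) ⟨hw, by omega⟩ le_rfl)
  obtain ⟨c1, hc1, c2, hc2, hcsum⟩ := Submodule.mem_sup.mp (hWn1 hcc)
  have hc1WF : c1 ∈ W (p + q - 1) ⊓ F p := by rw [hprev p]; exact hc1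
  have hc2L : c2 ∈ Lpq W Fbar p q := by
    have hTle : (⨆ (rs : ℤ × ℤ) (_ : rs.1 + rs.2 ≤ p + q - 1 ∧ rs.1 ≤ p - 1),
        Ipq W F Fbar rs.1 rs.2) ≤ Lpq W Fbar p q :=
      iSup₂_le fun rs hrs => Ipq_le_Lpq_of_lt hWmono hFb hrs.2 hrs.1
    exact hTle hc2
  have hv' : v - c1 ∈ Ipq W F Fbar p q := by
    refine mem_Ipq.mpr ⟨Submodule.mem_inf.mpr ⟨?_, ?_⟩, ?_⟩
    · exact sub_mem hvW (hWmono (by omega) (Submodule.mem_inf.mp hc1WF).1)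
    · exact sub_mem hvF (Submodule.mem_inf.mp hc1WF).2
    · have he : v - c1 = b + c2 := by
        rw [← hbc, ← hcsum]; abel
      rw [he]
      exact add_mem (Submodule.mem_sup_left hb) hc2L
  exact Submodule.mem_sup.mpr ⟨v - c1, hv', c1, hc1WF, by abel⟩

theorem main
    (hodge : ∀ n p : ℤ,
      (W n ⊓ F p) ⊔ (W n ⊓ Fbar (n + 1 - p)) ⊔ W (n - 1) = W n ∧
      (W n ⊓ F p) ⊓ ((W n ⊓ Fbar (n + 1 - p)) ⊔ W (n - 1)) ≤ W (n - 1))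
    (hWmono : Monotone W) (hFanti : Antitone F) (hFb : Antitone Fbar)
    {a c pt : ℤ} (ha : W a = ⊥) (hc : F c = ⊥) (hpt : F pt = ⊤) :
    ∀ n p : ℤ, W n ⊓ F p = Spn W F Fbar n p := by
  have base : ∀ n p : ℤ, n ≤ a → W n ⊓ F p = Spn W F Fbar n p := by
    intro n p hn
    have hW : W n ≤ ⊥ := by rw [← ha]; exact hWmono hn
    have h1 : W n ⊓ F p = ⊥ := by
      rw [eq_bot_iff]; exact inf_le_left.trans hW
    have h2 : Spn W F Fbar n p = ⊥ := by
      rw [eq_bot_iff]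
      exact ((Spn_le_WF hWmono hFanti n p).trans inf_le_left).trans hW
    rw [h1, h2]
  have step : ∀ n : ℤ, (∀ p' : ℤ, W (n - 1) ⊓ F p' = Spn W F Fbar (n - 1) p') →
      ∀ p : ℤ, W n ⊓ F p = Spn W F Fbar n p := by
    intro n hprev
    have keyp : ∀ j : ℕ, ∀ p : ℤ, c - j ≤ p → W n ⊓ F p = Spn W F Fbar n p := by
      intro j
      induction j with
      | zero =>
        intro p hp
        have h1 : F p = ⊥ := by
          rw [eq_bot_iff, ← hc]; exact hFanti (by omega)
        have h2 : Spn W F Fbar n p ≤ ⊥ := by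
          refine ((Spn_le_WF hWmono hFanti n p).trans inf_le_right).trans ?_
          rw [h1]
        rw [h1, inf_bot_eq, eq_comm, eq_bot_iff]
        exact h2
      | succ j ih =>
        intro p hp
        by_cases h : c - j ≤ p
        · exact ih p h
        push_neg at h
        refine le_antisymm ?_ (Spn_le_WF hWmono hFanti n p)
        intro v hv
        obtain ⟨hvW, hvF⟩ := Submodule.mem_inf.mp hv
        have hsup := (hodge n (p + 1)).1
        rw [show n + 1 - (p + 1) = n - p by ring] at hsup
        have hvW' := hvW
        rw [← hsup, sup_assoc] at hvW'
        obtain ⟨x, hx, y, hy, hxy⟩ := Submodule.mem_sup.mp hvW'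
        obtain ⟨hxW, hxF⟩ := Submodule.mem_inf.mp hx
        have hyv : y = v - x := by rw [← hxy]; abel
        have hprev' : ∀ p' : ℤ, W (p + (n - p) - 1) ⊓ F p' =
            Spn W F Fbar (p + (n - p) - 1) p' := by
          intro p'
          rw [show p + (n - p) - 1 = n - 1 by ring]
          exact hprev p'
        have hlift := lift hWmono hFanti hFb hpt p (n - p) hprev'
        rw [show p + (n - p) = n by ring] at hlift
        have hymem : y ∈ (W n ⊓ F p) ⊓ ((W n ⊓ Fbar (n - p)) ⊔ W (n - 1)) := by
          refine Submodule.mem_inf.mpr ⟨Submodule.mem_inf.mpr ⟨?_, ?_⟩, hy⟩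
          · rw [hyv]; exact sub_mem hvW hxW
          · rw [hyv]; exact sub_mem hvF (hFanti (by omega : p ≤ p + 1) hxF)
        have hyS : y ∈ Spn W F Fbar n p := by
          rcases Submodule.mem_sup.mp (hlift hymem) with ⟨u, hu, w, hw, huw⟩
          have hu' : u ∈ Spn W F Fbar n p := Ipq_le_Spn (by omega) le_rfl hu
          have hw' : w ∈ Spn W F Fbar n p := by
            rw [hprev p] at hw
            exact Spn_mono_n (by omega) hw
          rw [← huw]; exact add_mem hu' hw'
        have hxS : x ∈ Spn W F Fbar n p := by
          have hx' : x ∈ W n ⊓ F (p + 1) := Submodule.mem_inf.mpr ⟨hxW, hxF⟩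
          rw [ih (p + 1) (by omega)] at hx'
          exact Spn_anti_p (by omega) hx'
        rw [← hxy]
        exact add_mem hxS hyS
    intro p
    exact keyp (c - p).toNat p (by omega)
  have key : ∀ k : ℕ, ∀ n : ℤ, n ≤ a + k → ∀ p : ℤ, W n ⊓ F p = Spn W F Fbar n p := by
    intro k
    induction k with
    | zero => intro n hn p; exact base n p (by omega)
    | succ k ih =>
      intro n hn p
      by_cases h : n ≤ a + k
      · exact ih n h p
      · exact step n (fun p' => ih (n - 1) (by omega) p') p
  intro n p
  exact key (n - a).toNat n (by omega) p

end Span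

section Assemble

variable {σ : V →ₗ[ℝ] V} {W F Fbar : ℤ → Submodule ℂ V}

variable (hodge : ∀ n p : ℤ,
      (W n ⊓ F p) ⊔ (W n ⊓ Fbar (n + 1 - p)) ⊔ W (n - 1) = W n ∧
      (W n ⊓ F p) ⊓ ((W n ⊓ Fbar (n + 1 - p)) ⊔ W (n - 1)) ≤ W (n - 1))

include hodge

theorem Wspan
    (hWmono : Monotone W) (hFanti : Antitone F) (hFb : Antitone Fbar)
    (hFbar : ∀ p : ℤ, (Fbar p : Set V) = σ '' (F p))
    {a c pt : ℤ} (ha : W a = ⊥) (hc : F c = ⊥) (hpt : F pt = ⊤) (n : ℤ) :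
    W n = ⨆ (rs : ℤ × ℤ) (_ : rs.1 + rs.2 ≤ n), Ipq W F Fbar rs.1 rs.2 := by
  set pm := min pt (a + 2 - c) with hpmdef
  have hFpm : F pm = ⊤ := eq_top_iff.mpr (hpt ▸ hFanti (min_le_left _ _))
  have h1 : W n = Spn W F Fbar n pm := by
    have := main hodge hWmono hFanti hFb ha hc hpt n pm
    rwa [hFpm, inf_top_eq] at this
  apply le_antisymm
  · rw [h1]
    apply Spn_le
    intro r s hw _
    exact le_iSup₂_of_le (r, s) hw le_rfl
  · apply iSup₂_le
    intro rs hw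
    by_cases hP : pm ≤ rs.1
    · rw [h1]; exact Ipq_le_Spn hw hP
    · rw [Ipq_bot_low hodge hWmono hFb hFbar ha hc (show rs.1 ≤ a + 1 - c by omega)]
      exact bot_le

theorem Fspan
    (hWmono : Monotone W) (hFanti : Antitone F) (hFb : Antitone Fbar)
    (hFbar : ∀ p : ℤ, (Fbar p : Set V) = σ '' (F p))
    {a c pt bW : ℤ} (ha : W a = ⊥) (hc : F c = ⊥) (hpt : F pt = ⊤) (hbW : W bW = ⊤)
    (r : ℤ) :
    F r = ⨆ (rs : ℤ × ℤ) (_ : r ≤ rs.1), Ipq W F Fbar rs.1 rs.2 := by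
  set n0 := max bW (2 * c - 2) with hn0def
  have hWn0 : W n0 = ⊤ := eq_top_iff.mpr (hbW ▸ hWmono (le_max_left _ _))
  have h1 : F r = Spn W F Fbar n0 r := by
    have := main hodge hWmono hFanti hFb ha hc hpt n0 r
    rwa [hWn0, top_inf_eq] at this
  apply le_antisymm
  · rw [h1]
    apply Spn_le
    intro r' s _ hp
    exact le_iSup₂_of_le (r', s) hp le_rfl
  · apply iSup₂_le
    intro rs hp
    by_cases h2 : rs.1 + rs.2 ≤ n0
    · rw [h1]; exact Ipq_le_Spn h2 hp
    · by_cases h3 : c ≤ rs.1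
      · rw [Ipq_bot_p hFanti hc h3]; exact bot_le
      · rw [Ipq_bot_s hodge hWmono hFb hFbar ha hc (show c ≤ rs.2 by omega)]
        exact bot_le

theorem indepW
    (hWmono : Monotone W) (hFanti : Antitone F) (hFb : Antitone Fbar)
    {a : ℤ} (ha : W a = ⊥) (p q : ℤ) :
    Ipq W F Fbar p q ⊓ ((⨆ (rs : ℤ × ℤ) (_ : rs.1 + rs.2 = p + q ∧ rs.1 ≠ p),
      Ipq W F Fbar rs.1 rs.2) ⊔ W (p + q - 1)) = ⊥ := by
  have pairP : ∀ r s : ℤ, p + q + 1 - r ≤ s →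
      ((W (p + q) ⊓ F r) ⊔ W (p + q - 1)) ⊓ ((W (p + q) ⊓ Fbar s) ⊔ W (p + q - 1)) ≤
        W (p + q - 1) := by
    intro r s hs x hx
    obtain ⟨hxf, hxg⟩ := Submodule.mem_inf.mp hx
    obtain ⟨a', ha', w, hw, haw⟩ := Submodule.mem_sup.mp hxf
    have ha'g : a' ∈ (W (p + q) ⊓ Fbar s) ⊔ W (p + q - 1) := by
      have he : a' = x - w := eq_sub_of_add_eq haw
      rw [he]
      exact sub_mem hxg (Submodule.mem_sup_right hw)
    have : a' ∈ W (p + q - 1) := pairInf hodge hFb hs (Submodule.mem_inf.mpr ⟨ha', ha'g⟩)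
    rw [← haw]
    exact add_mem this hw
  rw [eq_bot_iff]
  intro v hv
  obtain ⟨hvI, hvC⟩ := Submodule.mem_inf.mp hv
  obtain ⟨hvR, hvL⟩ := mem_Ipq.mp hvI
  have hvg : v ∈ (W (p + q) ⊓ Fbar q) ⊔ W (p + q - 1) := by
    rw [Lpq_eq] at hvL
    rcases Submodule.mem_sup.mp hvL with ⟨b, hb, cc, hcc, hbc⟩
    exact Submodule.mem_sup.mpr ⟨b, hb, cc,
      hWmono (by omega) (Mds_le_W hWmono _ _ hcc), hbc⟩
  have hCle : (⨆ (rs : ℤ × ℤ) (_ : rs.1 + rs.2 = p + q ∧ rs.1 ≠ p),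
      Ipq W F Fbar rs.1 rs.2) ⊔ W (p + q - 1) ≤
      ((W (p + q) ⊓ F (p + 1)) ⊔ W (p + q - 1)) ⊔
        ((W (p + q) ⊓ Fbar (q + 1)) ⊔ W (p + q - 1)) := by
    apply sup_le
    · apply iSup₂_le
      rintro ⟨r, s⟩ ⟨hw, hne⟩
      rcases lt_or_gt_of_ne hne with hlt | hgt
      · refine le_sup_of_le_right ?_
        refine le_trans (Ipq_le_L (p := r) (q := s)) ?_
        rw [Lpq_eq]
        apply sup_le
        · exact le_sup_of_le_left (inf_le_inf (hWmono (by omega)) (hFb (by omega)))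
        · exact le_sup_of_le_right ((Mds_le_W hWmono _ _).trans (hWmono (by omega)))
      · refine le_sup_of_le_left (le_sup_of_le_left ?_)
        exact Ipq_le_WF.trans (inf_le_inf (hWmono (by omega)) (hFanti (by omega)))
    · exact le_sup_of_le_left le_sup_right
  rcases Submodule.mem_sup.mp (hCle hvC) with ⟨x, hx, y, hy, hxy⟩
  have hxg : x ∈ (W (p + q) ⊓ Fbar q) ⊔ W (p + q - 1) := by
    have hyq : y ∈ (W (p + q) ⊓ Fbar q) ⊔ W (p + q - 1) :=
      sup_le_sup_right (inf_le_inf_left _ (hFb (by omega : q ≤ q + 1))) _ hy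
    have he : x = v - y := eq_sub_of_add_eq hxy
    rw [he]
    exact sub_mem hvg hyq
  have hxW : x ∈ W (p + q - 1) :=
    pairP (p + 1) q (by omega) (Submodule.mem_inf.mpr ⟨hx, hxg⟩)
  have hyf : y ∈ (W (p + q) ⊓ F p) ⊔ W (p + q - 1) := by
    have he : y = v - x := by rw [← hxy]; abel
    rw [he]
    exact sub_mem (Submodule.mem_sup_left hvR) (Submodule.mem_sup_right hxW)
  have hyW : y ∈ W (p + q - 1) :=
    pairP p (q + 1) (by omega) (Submodule.mem_inf.mpr ⟨hyf, hy⟩)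
  have hvW1 : v ∈ W (p + q - 1) := by rw [← hxy]; exact add_mem hxW hyW
  have hres := Ipq_inf_W hodge hWmono hFb ha p q
  have hmem : v ∈ Ipq W F Fbar p q ⊓ W (p + q - 1) := Submodule.mem_inf.mpr ⟨hvI, hvW1⟩
  rw [hres] at hmem
  exact hmem

theorem UnW
    (hWmono : Monotone W) (hFanti : Antitone F) (hFb : Antitone Fbar)
    (hFbar : ∀ p : ℤ, (Fbar p : Set V) = σ '' (F p))
    {a c : ℤ} (ha : W a = ⊥) (hc : F c = ⊥) (n : ℤ) :
    W (n - 1) ⊓ (⨆ (rs : ℤ × ℤ) (_ : rs.1 + rs.2 = n), Ipq W F Fbar rs.1 rs.2) = ⊥ := by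
  have hred : (⨆ (rs : ℤ × ℤ) (_ : rs.1 + rs.2 = n), Ipq W F Fbar rs.1 rs.2)
      ≤ ⨆ r ∈ Finset.Icc (a + 2 - c) (c - 1), Ipq W F Fbar r (n - r) := by
    apply iSup₂_le
    rintro ⟨r, s⟩ hw
    have hs : s = n - r := by omega
    subst hs
    by_cases hmem : r ∈ Finset.Icc (a + 2 - c) (c - 1)
    · exact le_iSup₂_of_le r hmem le_rfl
    · rw [Finset.mem_Icc] at hmem
      push_neg at hmem
      by_cases h3 : c ≤ r
      · rw [Ipq_bot_p hFanti hc h3]; exact bot_le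
      · rw [Ipq_bot_low hodge hWmono hFb hFbar ha hc (show r ≤ a + 1 - c by omega)]
        exact bot_le
  have hfin : ∀ t : Finset ℤ,
      W (n - 1) ⊓ (⨆ r ∈ t, Ipq W F Fbar r (n - r)) = ⊥ := by
    intro t
    induction t using Finset.induction_on with
    | empty => simp
    | @insert r₀ t hr₀ ih =>
      rw [Finset.iSup_insert]
      rw [eq_bot_iff]
      intro v hv
      obtain ⟨hvW, hvU⟩ := Submodule.mem_inf.mp hv
      obtain ⟨x, hx, y, hy, hxy⟩ := Submodule.mem_sup.mp hvU
      have hyC : y ∈ ⨆ (rs : ℤ × ℤ)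
          (_ : rs.1 + rs.2 = r₀ + (n - r₀) ∧ rs.1 ≠ r₀), Ipq W F Fbar rs.1 rs.2 := by
        have hle : (⨆ r ∈ t, Ipq W F Fbar r (n - r)) ≤ ⨆ (rs : ℤ × ℤ)
            (_ : rs.1 + rs.2 = r₀ + (n - r₀) ∧ rs.1 ≠ r₀), Ipq W F Fbar rs.1 rs.2 := by
          apply iSup₂_le
          intro r hr
          exact le_iSup₂_of_le (r, n - r)
            ⟨by ring, fun hE => hr₀ (hE ▸ hr)⟩ le_rfl
        exact hle hy
      have hx0 : x = 0 := by
        have hxm : x ∈ Ipq W F Fbar r₀ (n - r₀) ⊓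
            ((⨆ (rs : ℤ × ℤ) (_ : rs.1 + rs.2 = r₀ + (n - r₀) ∧ rs.1 ≠ r₀),
              Ipq W F Fbar rs.1 rs.2) ⊔ W (r₀ + (n - r₀) - 1)) := by
          refine Submodule.mem_inf.mpr ⟨hx, ?_⟩
          have hxv : x = v - y := eq_sub_of_add_eq hxy
          rw [hxv]
          refine sub_mem (Submodule.mem_sup_right ?_) (Submodule.mem_sup_left hyC)
          rw [show r₀ + (n - r₀) - 1 = n - 1 by ring]
          exact hvW
        have hres := indepW hodge hWmono hFanti hFb ha r₀ (n - r₀)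
        rw [hres] at hxm
        exact hxm
      have hvt : v ∈ W (n - 1) ⊓ (⨆ r ∈ t, Ipq W F Fbar r (n - r)) := by
        refine Submodule.mem_inf.mpr ⟨hvW, ?_⟩
        rw [← hxy, hx0, zero_add]
        exact hy
      rw [ih] at hvt
      exact hvt
  rw [eq_bot_iff]
  refine le_trans (inf_le_inf_left _ hred) ?_
  exact (hfin (Finset.Icc (a + 2 - c) (c - 1))).le

theorem Zlem
    (hWmono : Monotone W) (hFanti : Antitone F) (hFb : Antitone Fbar)
    (hFbar : ∀ p : ℤ, (Fbar p : Set V) = σ '' (F p))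
    {a c : ℤ} (ha : W a = ⊥) (hc : F c = ⊥) :
    ∀ m : ℤ, W m ⊓ (⨆ (rs : ℤ × ℤ) (_ : m + 1 ≤ rs.1 + rs.2),
      Ipq W F Fbar rs.1 rs.2) = ⊥ := by
  have key : ∀ k : ℕ, ∀ m : ℤ, 2 * c - 2 - k ≤ m →
      W m ⊓ (⨆ (rs : ℤ × ℤ) (_ : m + 1 ≤ rs.1 + rs.2), Ipq W F Fbar rs.1 rs.2) = ⊥ := by
    intro k
    induction k with
    | zero =>
      intro m hm
      have hE : (⨆ (rs : ℤ × ℤ) (_ : m + 1 ≤ rs.1 + rs.2), Ipq W F Fbar rs.1 rs.2) = ⊥ := by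
        rw [eq_bot_iff]
        apply iSup₂_le
        intro rs hw
        by_cases h3 : c ≤ rs.1
        · rw [Ipq_bot_p hFanti hc h3]
        · rw [Ipq_bot_s hodge hWmono hFb hFbar ha hc (show c ≤ rs.2 by omega)]
      rw [hE, inf_bot_eq]
    | succ k ih =>
      intro m hm
      by_cases h : 2 * c - 2 - k ≤ m
      · exact ih m h
      rw [eq_bot_iff]
      intro v hv
      obtain ⟨hvW, hvE⟩ := Submodule.mem_inf.mp hv
      have hsplit : (⨆ (rs : ℤ × ℤ) (_ : m + 1 ≤ rs.1 + rs.2), Ipq W F Fbar rs.1 rs.2) ≤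
          (⨆ (rs : ℤ × ℤ) (_ : rs.1 + rs.2 = m + 1), Ipq W F Fbar rs.1 rs.2) ⊔
          (⨆ (rs : ℤ × ℤ) (_ : m + 1 + 1 ≤ rs.1 + rs.2), Ipq W F Fbar rs.1 rs.2) := by
        apply iSup₂_le
        intro rs hw
        by_cases h2 : rs.1 + rs.2 = m + 1
        · exact le_sup_of_le_left (le_iSup₂_of_le rs h2 le_rfl)
        · exact le_sup_of_le_right (le_iSup₂_of_le rs (by omega) le_rfl)
      obtain ⟨u, hu, e, he, hue⟩ := Submodule.mem_sup.mp (hsplit hvE)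
      have huW : u ∈ W (m + 1) := by
        have hle : (⨆ (rs : ℤ × ℤ) (_ : rs.1 + rs.2 = m + 1), Ipq W F Fbar rs.1 rs.2)
            ≤ W (m + 1) :=
          iSup₂_le fun rs h => Ipq_le_WF.trans (inf_le_left.trans (hWmono (by omega)))
        exact hle hu
      have heW : e ∈ W (m + 1) := by
        have he' : e = v - u := by rw [← hue]; abel
        rw [he']
        exact sub_mem (hWmono (by omega) hvW) huW
      have he0 : e ∈ (⊥ : Submodule ℂ V) := by
        have := ih (m + 1) (by omega)
        rw [← this]
        exact Submodule.mem_inf.mpr ⟨heW, he⟩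
      rw [Submodule.mem_bot] at he0
      have hvu : v = u := by rw [← hue, he0, add_zero]
      have hres := UnW hodge hWmono hFanti hFb hFbar ha hc (m + 1)
      rw [show m + 1 - 1 = m by ring] at hres
      rw [← hres]
      exact Submodule.mem_inf.mpr ⟨hvW, hvu ▸ hu⟩
  intro m
  exact key (2 * c - 2 - m).toNat m (by omega)

theorem conjI
    (hσσ : ∀ x : V, σ (σ x) = x)
    (hWmono : Monotone W) (hWreal : ∀ n : ℤ, ∀ x ∈ W n, σ x ∈ W n)
    (hFanti : Antitone F) (hFb : Antitone Fbar)
    (hFbar : ∀ p : ℤ, (Fbar p : Set V) = σ '' (F p))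
    {a c pt : ℤ} (ha : W a = ⊥) (hc : F c = ⊥) (hpt : F pt = ⊤)
    (p q : ℤ) (x : V) (hx : x ∈ Ipq W F Fbar p q) :
    σ x ∈ Ipq W F Fbar q p ⊔ W (p + q - 1) := by
  obtain ⟨hxR, hxL⟩ := mem_Ipq.mp hx
  obtain ⟨hxW, hxF⟩ := Submodule.mem_inf.mp hxR
  rw [Lpq_eq] at hxL
  obtain ⟨b, hb, cc, hcc, hbc⟩ := Submodule.mem_sup.mp hxL
  have hccW : cc ∈ W (p + q - 2) := Mds_le_W hWmono _ _ hcc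
  have hsb : σ b ∈ W (p + q) ⊓ F q :=
    Submodule.mem_inf.mpr ⟨hWreal _ _ (Submodule.mem_inf.mp hb).1,
      sigma_mem_F hσσ hFbar (Submodule.mem_inf.mp hb).2⟩
  have hsc : σ cc ∈ W (p + q - 2) := hWreal _ _ hccW
  have hsx : σ x ∈ W (p + q) := hWreal _ _ hxW
  have hsxFb : σ x ∈ Fbar p := sigma_mem_Fbar hFbar hxF
  have hprev' : ∀ p' : ℤ, W (q + p - 1) ⊓ F p' = Spn W F Fbar (q + p - 1) p' := by
    intro p'
    rw [show q + p - 1 = p + q - 1 by ring]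
    exact main hodge hWmono hFanti hFb ha hc hpt (p + q - 1) p'
  have hlift := lift hWmono hFanti hFb hpt q p hprev'
  rw [show q + p = p + q by ring] at hlift
  have hsbmem : σ b ∈ (W (p + q) ⊓ F q) ⊓ ((W (p + q) ⊓ Fbar p) ⊔ W (p + q - 1)) := by
    refine Submodule.mem_inf.mpr ⟨hsb, ?_⟩
    have hb' : σ b = σ x - σ cc := by
      rw [← map_sub]
      congr 1
      exact eq_sub_of_add_eq hbc
    rw [hb']
    exact sub_mem (Submodule.mem_sup_left (Submodule.mem_inf.mpr ⟨hsx, hsxFb⟩))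
      (Submodule.mem_sup_right (hWmono (by omega) hsc))
  have hsbI := hlift hsbmem
  rcases Submodule.mem_sup.mp hsbI with ⟨u, hu, w, hw, huw⟩
  have hsxeq : σ x = u + (w + σ cc) := by
    have : σ x = σ b + σ cc := by rw [← map_add]; congr 1; exact hbc.symm
    rw [this, ← huw]; abel
  rw [hsxeq]
  refine Submodule.mem_sup.mpr ⟨u, hu, w + σ cc, ?_, rfl⟩
  exact add_mem ((Submodule.mem_inf.mp hw).1) (hWmono (by omega) hsc)

end Assemble

end Stmt11


open Stmt11 in

/-- Deligne's bigrading of a mixed Hodge structure; Morgan,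
Proposition 1.9.  Let `V` be a finite-dimensional real vector space with an
`ℝ`-mixed Hodge structure `(W_*, F^*)`.  With
`R_{p,q} = W_{p+q}(V_ℂ) ∩ F^p(V_ℂ)` and
`L_{p,q} = W_{p+q} ∩ conj (F^q) + Σ_{i ≥ 2} W_{p+q-i} ∩ conj (F^{q-i+1})` and
`V_{p,q} = R_{p,q} ∩ L_{p,q}`, one has `V_ℂ = ⊕ V_{p,q}`,
`W_n(V_ℂ) = ⊕_{p+q ≤ n} V_{p,q}`, `F^r(V_ℂ) = ⊕_{p ≥ r} V_{p,q}`, and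
`conj V_{p,q} ≡ V_{q,p}` modulo `⊕_{r+s < p+q} V_{r,s}`.

`V_ℂ` is presented as a complex vector space with a real structure, i.e. a
conjugate-linear involution `σ`; the weight filtration is defined over `ℝ`
(i.e. `σ`-invariant). -/
theorem stmt_11
    {V : Type*} [AddCommGroup V] [Module ℂ V] [FiniteDimensional ℂ V]
    -- the real structure (complex conjugation) on `V_ℂ`
    (σ : V →ₗ[ℝ] V) (hσσ : ∀ x : V, σ (σ x) = x)
    (hσsmul : ∀ (z : ℂ) (x : V), σ (z • x) = (starRingEnd ℂ) z • σ x)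
    -- weight filtration (increasing, finite, defined over `ℝ`)
    (W : ℤ → Submodule ℂ V) (hWmono : Monotone W)
    (hWreal : ∀ n : ℤ, ∀ x ∈ W n, σ x ∈ W n)
    (hWbot : ∃ a : ℤ, W a = ⊥) (hWtop : ∃ b : ℤ, W b = ⊤)
    -- Hodge filtration (decreasing, finite)
    (F : ℤ → Submodule ℂ V) (hFanti : Antitone F)
    (hFbot : ∃ a : ℤ, F a = ⊥) (hFtop : ∃ b : ℤ, F b = ⊤)
    -- the conjugate Hodge filtration `Fbar p = σ (F p)`
    (Fbar : ℤ → Submodule ℂ V) (hFbar : ∀ p : ℤ, (Fbar p : Set V) = σ '' (F p))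
    -- `F` induces an `ℝ`-Hodge structure of weight `n` on `Gr_n^W V_ℂ` :
    -- `F^p ⊕ conj F^{n+1-p} = Gr_n^W` for every `p`
    (hodge : ∀ n p : ℤ,
      (W n ⊓ F p) ⊔ (W n ⊓ Fbar (n + 1 - p)) ⊔ W (n - 1) = W n ∧
      (W n ⊓ F p) ⊓ ((W n ⊓ Fbar (n + 1 - p)) ⊔ W (n - 1)) ≤ W (n - 1)) :
    let R : ℤ → ℤ → Submodule ℂ V := fun p q => W (p + q) ⊓ F p
    let L : ℤ → ℤ → Submodule ℂ V := fun p q =>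
      (W (p + q) ⊓ Fbar q) ⊔
        ⨆ (i : ℕ) (_ : 2 ≤ i), (W (p + q - (i : ℤ)) ⊓ Fbar (q - (i : ℤ) + 1))
    let Vpq : ℤ → ℤ → Submodule ℂ V := fun p q => R p q ⊓ L p q
    -- the canonical bigrading :
    DirectSum.IsInternal (fun pq : ℤ × ℤ => Vpq pq.1 pq.2) ∧
    (∀ n : ℤ, W n = ⨆ (pq : ℤ × ℤ) (_ : pq.1 + pq.2 ≤ n), Vpq pq.1 pq.2) ∧
    (∀ r : ℤ, F r = ⨆ (pq : ℤ × ℤ) (_ : r ≤ pq.1), Vpq pq.1 pq.2) ∧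
    (∀ p q : ℤ, ∀ x ∈ Vpq p q,
      σ x ∈ Vpq q p ⊔ ⨆ (rs : ℤ × ℤ) (_ : rs.1 + rs.2 < p + q), Vpq rs.1 rs.2) := by
  intro R L Vpq
  obtain ⟨a, ha⟩ := hWbot
  obtain ⟨bW, hbW⟩ := hWtop
  obtain ⟨c, hc⟩ := hFbot
  obtain ⟨pt, hpt⟩ := hFtop
  have hFb : Antitone Fbar := Fbar_anti hFanti hFbar
  have hVI : ∀ p q : ℤ, Vpq p q = Ipq W F Fbar p q := fun _ _ => rfl
  refine ⟨?_, ?_, ?_, ?_⟩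
  · -- direct sum decomposition
    rw [DirectSum.isInternal_submodule_iff_iSupIndep_and_iSup_eq_top]
    constructor
    · intro pq
      obtain ⟨p, q⟩ := pq
      simp only [hVI]
      rw [disjoint_iff]
      rw [eq_bot_iff]
      intro v hv
      obtain ⟨hvI, hvC⟩ := Submodule.mem_inf.mp hv
      have hCle : (⨆ (j : ℤ × ℤ) (_ : j ≠ (p, q)), Ipq W F Fbar j.1 j.2) ≤
          (⨆ (rs : ℤ × ℤ) (_ : p + q + 1 ≤ rs.1 + rs.2), Ipq W F Fbar rs.1 rs.2) ⊔
          ((⨆ (rs : ℤ × ℤ) (_ : rs.1 + rs.2 = p + q ∧ rs.1 ≠ p),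
            Ipq W F Fbar rs.1 rs.2) ⊔ W (p + q - 1)) := by
        apply iSup₂_le
        rintro ⟨r, s⟩ hne
        rcases lt_trichotomy (r + s) (p + q) with hlt | heq | hgt
        · refine le_sup_of_le_right (le_sup_of_le_right ?_)
          exact Ipq_le_WF.trans (inf_le_left.trans (hWmono (by omega)))
        · have hrp : r ≠ p := by
            rintro rfl
            have hsq : s = q := by omega
            exact hne (by rw [hsq])
          exact le_sup_of_le_right
            (le_sup_of_le_left (le_iSup₂_of_le (r, s) ⟨heq, hrp⟩ le_rfl))
        · exact le_sup_of_le_left (le_iSup₂_of_le (r, s) (by omega) le_rfl)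
      obtain ⟨e, he, w, hw, hew⟩ := Submodule.mem_sup.mp (hCle hvC)
      have hwW : w ∈ W (p + q) := by
        have hle : (⨆ (rs : ℤ × ℤ) (_ : rs.1 + rs.2 = p + q ∧ rs.1 ≠ p),
            Ipq W F Fbar rs.1 rs.2) ⊔ W (p + q - 1) ≤ W (p + q) := by
          apply sup_le
          · exact iSup₂_le fun rs h =>
              Ipq_le_WF.trans (inf_le_left.trans (hWmono (by omega)))
          · exact hWmono (by omega)
        exact hle hw
      have heW : e ∈ W (p + q) := by
        have he' : e = v - w := eq_sub_of_add_eq hew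
        rw [he']
        exact sub_mem (Ipq_le_WF.trans inf_le_left hvI) hwW
      have he0 : e = 0 := by
        have hres := Zlem hodge hWmono hFanti hFb hFbar ha hc (p + q)
        have : e ∈ (⊥ : Submodule ℂ V) := by
          rw [← hres]; exact Submodule.mem_inf.mpr ⟨heW, he⟩
        rwa [Submodule.mem_bot] at this
      have hvw : v = w := by rw [← hew, he0, zero_add]
      have hres := indepW hodge hWmono hFanti hFb ha p q
      have hmem : v ∈ Ipq W F Fbar p q ⊓
          ((⨆ (rs : ℤ × ℤ) (_ : rs.1 + rs.2 = p + q ∧ rs.1 ≠ p),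
            Ipq W F Fbar rs.1 rs.2) ⊔ W (p + q - 1)) :=
        Submodule.mem_inf.mpr ⟨hvI, hvw ▸ hw⟩
      rw [hres] at hmem
      exact hmem
    · rw [eq_top_iff]
      have hW := Wspan hodge hWmono hFanti hFb hFbar ha hc hpt bW
      calc (⊤ : Submodule ℂ V) = W bW := hbW.symm
        _ ≤ ⨆ (pq : ℤ × ℤ), Vpq pq.1 pq.2 := by
            rw [hW]
            apply iSup₂_le
            intro rs _
            rw [← hVI rs.1 rs.2]
            exact le_iSup (fun pq : ℤ × ℤ => Vpq pq.1 pq.2) rs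
  · intro n
    simp only [hVI]
    exact Wspan hodge hWmono hFanti hFb hFbar ha hc hpt n
  · intro r
    simp only [hVI]
    exact Fspan hodge hWmono hFanti hFb hFbar ha hc hpt hbW r
  · intro p q x hx
    simp only [hVI] at hx ⊢
    have h1 := conjI hodge hσσ hWmono hWreal hFanti hFb hFbar ha hc hpt p q x hx
    have h2 : W (p + q - 1) ≤ ⨆ (rs : ℤ × ℤ) (_ : rs.1 + rs.2 < p + q),
        Ipq W F Fbar rs.1 rs.2 := by
      rw [Wspan hodge hWmono hFanti hFb hFbar ha hc hpt (p + q - 1)]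
      exact iSup₂_le fun rs h => le_iSup₂_of_le rs (by omega) le_rfl
    exact sup_le_sup_left h2 _ h1
end

section
/- Let B^{*,*} = ⟨1, dx, (dx)², …, (dx)^{n−1}⟩ ⊗ Λ⟨z, z̄⟩ be the differential bigraded algebra with (dx) of bidegree (1,1), z of bidegree (1,0), z̄ of bidegree (0,1), differential ∂̄ trivial on the first factor and on z̄, and ∂̄z = c·dx with c ≠ 0. Then the Dolbeault-type cohomology of B^{*,*} satisfies: H^{0,0} ≅ C, H^{0,1} ≅ C·z̄, H^{n,n−1} ≅ C·(dx)^{n−1}∧z, H^{n,n} ≅ C·(dx)^{n−1}∧z∧z̄, and H^{p,q} = 0 otherwise. -/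
/-- The monomial family of the Dolbeault model of a primary Hopf manifold:
`u i = (dx)^i`, `a i = (dx)^i z`, `b i = (dx)^i z̄`, `c i = (dx)^i z z̄`,
for `0 ≤ i ≤ n - 1`. -/
def hopfMonomials {A : Type*} (n : ℕ) (u a b c : ℕ → A) :
    (Fin n ⊕ Fin n) ⊕ (Fin n ⊕ Fin n) → A :=
  Sum.elim (Sum.elim (fun i => u i) fun i => a i)
    (Sum.elim (fun i => b i) fun i => c i)

/-- The bigrading of the Dolbeault model of a primary Hopf manifold: `(dx)^i` has
bidegree `(i, i)`, `(dx)^i z` bidegree `(i+1, i)`, `(dx)^i z̄` bidegree `(i, i+1)`,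
`(dx)^i z z̄` bidegree `(i+1, i+1)`. -/
def hopfGrading {A : Type*} [AddCommGroup A] [Module ℂ A] (n : ℕ)
    (u a b c : ℕ → A) (p q : ℤ) : Submodule ℂ A :=
  (⨆ (i : ℕ) (_ : i < n ∧ p = (i : ℤ) ∧ q = (i : ℤ)), ℂ ∙ u i) ⊔
  (⨆ (i : ℕ) (_ : i < n ∧ p = (i : ℤ) + 1 ∧ q = (i : ℤ)), ℂ ∙ a i) ⊔
  (⨆ (i : ℕ) (_ : i < n ∧ p = (i : ℤ) ∧ q = (i : ℤ) + 1), ℂ ∙ b i) ⊔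
  (⨆ (i : ℕ) (_ : i < n ∧ p = (i : ℤ) + 1 ∧ q = (i : ℤ) + 1), ℂ ∙ c i)

section helpers
variable {A : Type*} [AddCommGroup A] [Module ℂ A]

lemma iSup_span_eq (v : ℕ → A) (P : ℕ → Prop) (i₀ : ℕ) (h₀ : P i₀)
    (hu : ∀ i, P i → i = i₀) :
    (⨆ (i : ℕ) (_ : P i), (ℂ ∙ v i)) = ℂ ∙ v i₀ := by
  refine le_antisymm (iSup_le fun i => iSup_le fun hi => by rw [hu i hi]) ?_
  exact le_iSup_of_le i₀ (le_iSup_of_le h₀ le_rfl)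

lemma iSup_span_bot (v : ℕ → A) (P : ℕ → Prop) (h : ∀ i, ¬ P i) :
    (⨆ (i : ℕ) (_ : P i), (ℂ ∙ v i)) = ⊥ :=
  le_bot_iff.mp (iSup_le fun i => iSup_le fun hi => absurd hi (h i))

variable (n : ℕ) (u a b c : ℕ → A)

lemma G_bot (p q : ℤ)
    (h1 : ∀ i : ℕ, ¬ (i < n ∧ p = (i:ℤ) ∧ q = (i:ℤ)))
    (h2 : ∀ i : ℕ, ¬ (i < n ∧ p = (i:ℤ)+1 ∧ q = (i:ℤ)))
    (h3 : ∀ i : ℕ, ¬ (i < n ∧ p = (i:ℤ) ∧ q = (i:ℤ)+1))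
    (h4 : ∀ i : ℕ, ¬ (i < n ∧ p = (i:ℤ)+1 ∧ q = (i:ℤ)+1)) :
    hopfGrading n u a b c p q = ⊥ := by
  unfold hopfGrading
  rw [iSup_span_bot u _ h1, iSup_span_bot a _ h2, iSup_span_bot b _ h3,
    iSup_span_bot c _ h4]
  simp

lemma G_u0 (hn : 0 < n) : hopfGrading n u a b c 0 0 = ℂ ∙ u 0 := by
  unfold hopfGrading
  rw [iSup_span_eq u _ 0 ⟨hn, by simp, by simp⟩ (fun i hi => by omega),
    iSup_span_bot a _ (fun i => by omega), iSup_span_bot b _ (fun i => by omega),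
    iSup_span_bot c _ (fun i => by omega)]
  simp

lemma G_diag (i : ℕ) (h1 : 1 ≤ i) (h2 : i < n) :
    hopfGrading n u a b c (i:ℤ) (i:ℤ) = (ℂ ∙ u i) ⊔ (ℂ ∙ c (i-1)) := by
  unfold hopfGrading
  rw [iSup_span_eq u _ i ⟨h2, rfl, rfl⟩ (fun j hj => by omega),
    iSup_span_bot a _ (fun j => by omega), iSup_span_bot b _ (fun j => by omega),
    iSup_span_eq c _ (i-1) (by omega) (fun j hj => by omega)]
  simp

lemma G_nn (hn : 0 < n) :
    hopfGrading n u a b c (n:ℤ) (n:ℤ) = ℂ ∙ c (n-1) := by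
  unfold hopfGrading
  rw [iSup_span_bot u _ (fun j => by omega), iSup_span_bot a _ (fun j => by omega),
    iSup_span_bot b _ (fun j => by omega),
    iSup_span_eq c _ (n-1) (by omega) (fun j hj => by omega)]
  simp

lemma G_a (j : ℕ) (hj : j < n) :
    hopfGrading n u a b c ((j:ℤ)+1) (j:ℤ) = ℂ ∙ a j := by
  unfold hopfGrading
  rw [iSup_span_bot u _ (fun i => by omega),
    iSup_span_eq a _ j ⟨hj, rfl, rfl⟩ (fun i hi => by omega),
    iSup_span_bot b _ (fun i => by omega), iSup_span_bot c _ (fun i => by omega)]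
  simp

lemma G_b (j : ℕ) (hj : j < n) :
    hopfGrading n u a b c (j:ℤ) ((j:ℤ)+1) = ℂ ∙ b j := by
  unfold hopfGrading
  rw [iSup_span_bot u _ (fun i => by omega), iSup_span_bot a _ (fun i => by omega),
    iSup_span_eq b _ j ⟨hj, rfl, rfl⟩ (fun i hi => by omega),
    iSup_span_bot c _ (fun i => by omega)]
  simp

end helpers

/-- Let `B^{*,*} = ⟨1, dx, …, (dx)^{n-1}⟩ ⊗ Λ⟨z, z̄⟩` be the
differential bigraded algebra with `dx` of bidegree `(1,1)`, `z` of bidegree `(1,0)`,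
`z̄` of bidegree `(0,1)`, and `∂̄` trivial on the first factor and on `z̄`, with
`∂̄ z = cc · dx`, `cc ≠ 0`.  Then the Dolbeault-type cohomology of `B^{*,*}`
satisfies `H^{0,0} ≅ ℂ`, `H^{0,1} ≅ ℂ·z̄`, `H^{n,n-1} ≅ ℂ·(dx)^{n-1} z`,
`H^{n,n} ≅ ℂ·(dx)^{n-1} z z̄`, and `H^{p,q} = 0` otherwise.

Cohomology at `(p,q)` is the quotient of the closed elements
`G p q ∩ ker ∂̄` by the exact ones `∂̄ (G p (q-1))`; the statement `H^{p,q} = ℂ·v` is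
expressed as `closed = (ℂ·v) ⊔ exact` together with `v ∉ exact`. -/
theorem stmt_19 (n : ℕ) (hn : 1 ≤ n)
    {A : Type*} [AddCommGroup A] [Module ℂ A]
    (u a b c : ℕ → A)
    -- the listed monomials form a basis of `B^{*,*}`
    (hbasis : LinearIndependent ℂ (hopfMonomials n u a b c))
    (hspan : Submodule.span ℂ (Set.range (hopfMonomials n u a b c)) = ⊤)
    -- the Dolbeault operator `∂̄`, a derivation vanishing on the basic part and on
    -- `z̄`, with `∂̄ z = cc · dx`
    (D : A →ₗ[ℂ] A) (cc : ℂ) (hcc : cc ≠ 0)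
    (hDu : ∀ i, D (u i) = 0) (hDb : ∀ i, D (b i) = 0)
    (hDa : ∀ i, i + 1 < n → D (a i) = cc • u (i + 1))
    (hDa' : ∀ i, n ≤ i + 1 → D (a i) = 0)
    (hDc : ∀ i, i + 1 < n → D (c i) = cc • b (i + 1))
    (hDc' : ∀ i, n ≤ i + 1 → D (c i) = 0) :
    let G := hopfGrading (A := A) n u a b c
    let closed : ℤ → ℤ → Submodule ℂ A := fun p q => G p q ⊓ LinearMap.ker D
    let exact : ℤ → ℤ → Submodule ℂ A := fun p q => Submodule.map D (G p (q - 1))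
    (closed 0 0 = (ℂ ∙ u 0) ⊔ exact 0 0 ∧ u 0 ∉ exact 0 0) ∧
    (closed 0 1 = (ℂ ∙ b 0) ⊔ exact 0 1 ∧ b 0 ∉ exact 0 1) ∧
    (closed (n : ℤ) ((n : ℤ) - 1) = (ℂ ∙ a (n - 1)) ⊔ exact (n : ℤ) ((n : ℤ) - 1) ∧
      a (n - 1) ∉ exact (n : ℤ) ((n : ℤ) - 1)) ∧
    (closed (n : ℤ) (n : ℤ) = (ℂ ∙ c (n - 1)) ⊔ exact (n : ℤ) (n : ℤ) ∧
      c (n - 1) ∉ exact (n : ℤ) (n : ℤ)) ∧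
    (∀ p q : ℤ,
      (p, q) ∉ ({((0 : ℤ), (0 : ℤ)), ((0 : ℤ), (1 : ℤ)), ((n : ℤ), (n : ℤ) - 1),
        ((n : ℤ), (n : ℤ))} : Set (ℤ × ℤ)) →
      closed p q ≤ exact p q) := by
  intro G closed exd
  have hcl : ∀ p q : ℤ, closed p q = G p q ⊓ LinearMap.ker D := fun _ _ => rfl
  have hex : ∀ p q : ℤ, exd p q = Submodule.map D (G p (q - 1)) := fun _ _ => rfl
  -- nonzeroness of the monomials
  have hune : ∀ i, i < n → u i ≠ 0 := fun i h => by
    simpa [hopfMonomials] using hbasis.ne_zero (Sum.inl (Sum.inl ⟨i, h⟩))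
  have hane : ∀ i, i < n → a i ≠ 0 := fun i h => by
    simpa [hopfMonomials] using hbasis.ne_zero (Sum.inl (Sum.inr ⟨i, h⟩))
  have hbne : ∀ i, i < n → b i ≠ 0 := fun i h => by
    simpa [hopfMonomials] using hbasis.ne_zero (Sum.inr (Sum.inl ⟨i, h⟩))
  have hcne : ∀ i, i < n → c i ≠ 0 := fun i h => by
    simpa [hopfMonomials] using hbasis.ne_zero (Sum.inr (Sum.inr ⟨i, h⟩))
  -- grading values
  have hG00 : G 0 0 = ℂ ∙ u 0 := G_u0 n u a b c hn
  have hG01 : G 0 1 = ℂ ∙ b 0 := by simpa using G_b n u a b c 0 hn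
  have hG0m1 : G 0 (-1) = ⊥ :=
    G_bot n u a b c 0 (-1) (fun i => by omega) (fun i => by omega)
      (fun i => by omega) (fun i => by omega)
  have hGnm2 : G (n:ℤ) ((n:ℤ)-2) = ⊥ :=
    G_bot n u a b c _ _ (fun i => by omega) (fun i => by omega)
      (fun i => by omega) (fun i => by omega)
  have hGnn1 : G (n:ℤ) ((n:ℤ)-1) = ℂ ∙ a (n-1) := by
    have h := G_a n u a b c (n-1) (by omega)
    rwa [show ((n-1:ℕ):ℤ)+1 = (n:ℤ) by omega, show ((n-1:ℕ):ℤ) = (n:ℤ)-1 by omega] at h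
  have hGnn : G (n:ℤ) (n:ℤ) = ℂ ∙ c (n-1) := G_nn n u a b c hn
  -- exact values at the four special spots
  have hex00 : exd 0 0 = ⊥ := by
    rw [hex, show (0:ℤ)-1 = -1 by norm_num, hG0m1, Submodule.map_bot]
  have hex01 : exd 0 1 = ⊥ := by
    rw [hex, show (1:ℤ)-1 = 0 by norm_num, hG00, Submodule.map_span,
      Set.image_singleton, hDu 0, Submodule.span_zero_singleton]
  have hexn1 : exd (n:ℤ) ((n:ℤ)-1) = ⊥ := by
    rw [hex, show (n:ℤ)-1-1 = (n:ℤ)-2 by ring, hGnm2, Submodule.map_bot]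
  have hexnn : exd (n:ℤ) (n:ℤ) = ⊥ := by
    rw [hex, hGnn1, Submodule.map_span, Set.image_singleton,
      hDa' (n-1) (by omega), Submodule.span_zero_singleton]
  refine ⟨⟨?_, ?_⟩, ⟨?_, ?_⟩, ⟨?_, ?_⟩, ⟨?_, ?_⟩, ?_⟩
  · rw [hcl, hG00, hex00, sup_bot_eq, inf_eq_left.mpr
      ((Submodule.span_singleton_le_iff_mem _ _).mpr (LinearMap.mem_ker.mpr (hDu 0)))]
  · rw [hex00, Submodule.mem_bot]; exact hune 0 hn
  · rw [hcl, hG01, hex01, sup_bot_eq, inf_eq_left.mpr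
      ((Submodule.span_singleton_le_iff_mem _ _).mpr (LinearMap.mem_ker.mpr (hDb 0)))]
  · rw [hex01, Submodule.mem_bot]; exact hbne 0 hn
  · rw [hcl, hGnn1, hexn1, sup_bot_eq, inf_eq_left.mpr
      ((Submodule.span_singleton_le_iff_mem _ _).mpr
        (LinearMap.mem_ker.mpr (hDa' (n-1) (by omega))))]
  · rw [hexn1, Submodule.mem_bot]; exact hane (n-1) (by omega)
  · rw [hcl, hGnn, hexnn, sup_bot_eq, inf_eq_left.mpr
      ((Submodule.span_singleton_le_iff_mem _ _).mpr
        (LinearMap.mem_ker.mpr (hDc' (n-1) (by omega))))]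
  · rw [hexnn, Submodule.mem_bot]; exact hcne (n-1) (by omega)
  · intro p q hpq
    simp only [Set.mem_insert_iff, Set.mem_singleton_iff, Prod.mk.injEq, not_or] at hpq
    obtain ⟨hpq1, hpq2, hpq3, hpq4⟩ := hpq
    rw [hcl, hex]
    by_cases hd : p = q
    · subst hd
      have hp0 : p ≠ 0 := fun h => hpq1 ⟨h, h⟩
      have hpn : p ≠ (n:ℤ) := fun h => hpq4 ⟨h, h⟩
      by_cases hlow : 1 ≤ p ∧ p ≤ (n:ℤ) - 1
      · set i := p.toNat with hidef
        have hip : (i:ℤ) = p := Int.toNat_of_nonneg (by omega)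
        have h1i : 1 ≤ i := by omega
        have hin : i < n := by omega
        have hGd : G p p = (ℂ ∙ u i) ⊔ (ℂ ∙ c (i-1)) := by
          rw [← hip]; exact G_diag n u a b c i h1i hin
        have hGd' : G p (p-1) = ℂ ∙ a (i-1) := by
          have h := G_a n u a b c (i-1) (by omega)
          rwa [show ((i-1:ℕ):ℤ)+1 = p by omega, show ((i-1:ℕ):ℤ) = p-1 by omega] at h
        rw [hGd, hGd']
        intro x hx
        obtain ⟨hxs, hxk⟩ := Submodule.mem_inf.mp hx
        obtain ⟨y, hy, z, hz, rfl⟩ := Submodule.mem_sup.mp hxs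
        obtain ⟨α, rfl⟩ := Submodule.mem_span_singleton.mp hy
        obtain ⟨β, rfl⟩ := Submodule.mem_span_singleton.mp hz
        have hD : D (α • u i + β • c (i-1)) = (β * cc) • b i := by
          rw [map_add, map_smul, map_smul, hDu, hDc (i-1) (by omega),
            Nat.sub_add_cancel h1i, smul_zero, zero_add, smul_smul]
        rw [LinearMap.mem_ker, hD] at hxk
        have hβ : β = 0 := by
          rcases smul_eq_zero.mp hxk with h | h
          · exact (mul_eq_zero.mp h).resolve_right hcc
          · exact absurd h (hbne i hin)
        subst hβ
        simp only [zero_smul, add_zero]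
        refine Submodule.mem_map.mpr ⟨(α * cc⁻¹) • a (i-1),
          Submodule.mem_span_singleton.mpr ⟨_, rfl⟩, ?_⟩
        rw [map_smul, hDa (i-1) (by omega), Nat.sub_add_cancel h1i, smul_smul,
          mul_assoc, inv_mul_cancel₀ hcc, mul_one]
      · have hb : G p p = ⊥ := G_bot n u a b c p p (fun i => by omega)
          (fun i => by omega) (fun i => by omega) (fun i => by omega)
        rw [hb]
        exact le_trans inf_le_left bot_le
    · by_cases hd2 : p = q + 1
      · subst hd2
        by_cases hq : 0 ≤ q ∧ q ≤ (n:ℤ) - 2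
        · set i := q.toNat with hidef
          have hiq : (i:ℤ) = q := Int.toNat_of_nonneg hq.1
          have hGa : G (q+1) q = ℂ ∙ a i := by
            rw [← hiq]; exact G_a n u a b c i (by omega)
          have hGb2 : G (q+1) (q-1) = ⊥ := G_bot n u a b c _ _ (fun j => by omega)
            (fun j => by omega) (fun j => by omega) (fun j => by omega)
          rw [hGa, hGb2, Submodule.map_bot]
          intro x hx
          obtain ⟨hxs, hxk⟩ := Submodule.mem_inf.mp hx
          obtain ⟨α, rfl⟩ := Submodule.mem_span_singleton.mp hxs
          rw [LinearMap.mem_ker, map_smul, hDa i (by omega), smul_smul] at hxk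
          have hα : α = 0 := by
            rcases smul_eq_zero.mp hxk with h | h
            · exact (mul_eq_zero.mp h).resolve_right hcc
            · exact absurd h (hune (i+1) (by omega))
          simp [hα]
        · have hb : G (q+1) q = ⊥ := G_bot n u a b c _ _ (fun j => by omega)
            (fun j => by omega) (fun j => by omega) (fun j => by omega)
          rw [hb]
          exact le_trans inf_le_left bot_le
      · by_cases hd3 : q = p + 1
        · subst hd3
          by_cases hp : 1 ≤ p ∧ p ≤ (n:ℤ) - 1
          · set i := p.toNat with hidef
            have hip : (i:ℤ) = p := Int.toNat_of_nonneg (by omega)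
            have h1i : 1 ≤ i := by omega
            have hin : i < n := by omega
            have hGb : G p (p+1) = ℂ ∙ b i := by
              rw [← hip]; exact G_b n u a b c i hin
            have hGdd : G p (p+1-1) = (ℂ ∙ u i) ⊔ (ℂ ∙ c (i-1)) := by
              rw [show p+1-1 = p by ring, ← hip]; exact G_diag n u a b c i h1i hin
            rw [hGb, hGdd]
            intro x hx
            obtain ⟨hxs, _⟩ := Submodule.mem_inf.mp hx
            obtain ⟨α, rfl⟩ := Submodule.mem_span_singleton.mp hxs
            refine Submodule.mem_map.mpr ⟨(α * cc⁻¹) • c (i-1),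
              Submodule.mem_sup_right (Submodule.mem_span_singleton.mpr ⟨_, rfl⟩), ?_⟩
            rw [map_smul, hDc (i-1) (by omega), Nat.sub_add_cancel h1i, smul_smul,
              mul_assoc, inv_mul_cancel₀ hcc, mul_one]
          · have hp0 : p ≠ 0 := fun h => hpq2 ⟨h, by omega⟩
            have hb : G p (p+1) = ⊥ := G_bot n u a b c _ _ (fun j => by omega)
              (fun j => by omega) (fun j => by omega) (fun j => by omega)
            rw [hb]
            exact le_trans inf_le_left bot_le
        · have hb : G p q = ⊥ := G_bot n u a b c _ _ (fun j => by omega)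
            (fun j => by omega) (fun j => by omega) (fun j => by omega)
          rw [hb]
          exact le_trans inf_le_left bot_le
end
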